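/- arXiv:2112.01792 — 5 statements merged into one kernel-verified Lean document; each statement's English description precedes it below -/
import Mathlib

section
/- With the partition, matrices, energy norm |||·||| and bilinear form A(·,·) as in the context, every function z : (0,T] → ℝ^{2d} whose restriction to each closed slab [t_{n−1}, t_n] extends to a continuously differentiable function satisfies the coercivity identity A(z, z) = |||z|||². -/
open Matrix MeasureTheory Set

/-- Squared Euclidean norm of a vector. -/
noncomputable def esq {ι : Type*} [Fintype ι] (v : ι → ℝ) : ℝ := ∑ i, v i ^ 2

/-- The DG-in-time bilinear form
`A(z,v) = Σₙ ∫_{Iₙ} (K̃ ż + A z)·v dt + Σ_{n=1}^{N−1} (K̃[z]ₙ)·v(tₙ⁺) + (K̃ z(0⁺))·v(0⁺)`,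
where a piecewise-smooth function `z` is represented by the family `Z` of its smooth
extensions from the slabs `Iₙ = (t_{n−1}, tₙ]` (so `z = Z n` on `Iₙ`,
`z(tₙ⁺) = Z (n+1) (t n)`, `z(tₙ⁻) = Z n (t n)`), and similarly for `v`. -/
noncomputable def dgBilin {d : ℕ}
    (Ktil Amat : Matrix (Fin d ⊕ Fin d) (Fin d ⊕ Fin d) ℝ)
    (N : ℕ) (t : ℕ → ℝ) (Z V : ℕ → ℝ → (Fin d ⊕ Fin d) → ℝ) : ℝ :=
  (∑ n ∈ Finset.Icc 1 N, ∫ s in (t (n-1))..(t n),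
      (Ktil.mulVec (deriv (Z n) s) + Amat.mulVec (Z n s)) ⬝ᵥ V n s)
  + (∑ n ∈ Finset.Icc 1 (N-1), Ktil.mulVec (Z (n+1) (t n) - Z n (t n)) ⬝ᵥ V (n+1) (t n))
  + Ktil.mulVec (Z 1 (t 0)) ⬝ᵥ V 1 (t 0)

/-- The squared DG energy norm
`|||z|||² = Σₙ ∫_{Iₙ} |L̃ z|² dt + ½|K̃^{1/2} z(0⁺)|² + ½ Σ_{n=1}^{N−1} |K̃^{1/2}[z]ₙ|²
           + ½|K̃^{1/2} z(T⁻)|²`,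
with `z` represented slab-wise by `Z` as in `dgBilin`. -/
noncomputable def dgNormSq {d : ℕ}
    (Ltil Ksqrt : Matrix (Fin d ⊕ Fin d) (Fin d ⊕ Fin d) ℝ)
    (N : ℕ) (t : ℕ → ℝ) (Z : ℕ → ℝ → (Fin d ⊕ Fin d) → ℝ) : ℝ :=
  (∑ n ∈ Finset.Icc 1 N, ∫ s in (t (n-1))..(t n), esq (Ltil.mulVec (Z n s)))
  + (1/2) * esq (Ksqrt.mulVec (Z 1 (t 0)))
  + (1/2) * ∑ n ∈ Finset.Icc 1 (N-1), esq (Ksqrt.mulVec (Z (n+1) (t n) - Z n (t n)))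
  + (1/2) * esq (Ksqrt.mulVec (Z N (t N)))

open scoped ComplexOrder in
/-- The square root `PosSemidef.sqrt` of the older Mathlib (removed since), with its old
definition. -/
noncomputable def Matrix.PosSemidef.sqrt {n 𝕜 : Type*} [Fintype n] [DecidableEq n] [RCLike 𝕜]
    {A : Matrix n n 𝕜} (hA : A.PosSemidef) : Matrix n n 𝕜 :=
  (hA.1.eigenvectorUnitary : Matrix n n 𝕜) * diagonal ((↑) ∘ (√·) ∘ hA.1.eigenvalues) *
    (star (hA.1.eigenvectorUnitary : Matrix n n 𝕜))

/-!
Testing `z` against itself, the skew-symmetric part of `A` drops out and leaves `|L̃ z|²`,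
while `K̃ ż · z` is the derivative of `½ K̃ z · z`; so slab `Iₙ` contributes
`∫ |L̃ z|² + ½ (K̃ z · z)(tₙ⁻) - ½ (K̃ z · z)(tₙ₋₁⁺)`. At an interior node the polarization
identity `K̃ [z] · z⁺ = ½ K̃ [z] · [z] + ½ K̃ z⁺ · z⁺ - ½ K̃ z⁻ · z⁻` turns the jump term into
`½ |K̃^{1/2} [z]ₙ|²` plus two endpoint values, and all endpoint values telescope except
`½ |K̃^{1/2} z(0⁺)|²` and `½ |K̃^{1/2} z(T⁻)|²`.
-/

open Finset

section QuadraticForm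

variable {ι : Type*} [Fintype ι]

theorem esq_eq_dotProduct (v : ι → ℝ) : esq v = v ⬝ᵥ v := by
  simp [esq, dotProduct, sq]

theorem Matrix.IsSymm.mulVec_dotProduct_comm {M : Matrix ι ι ℝ} (hM : M.IsSymm) (a b : ι → ℝ) :
    M *ᵥ a ⬝ᵥ b = M *ᵥ b ⬝ᵥ a := by
  rw [dotProduct_comm, dotProduct_mulVec, ← mulVec_transpose, hM.eq]

theorem Matrix.IsSymm.mulVec_sub_dotProduct {M : Matrix ι ι ℝ} (hM : M.IsSymm) (a b : ι → ℝ) :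
    M *ᵥ (b - a) ⬝ᵥ b = (M *ᵥ (b - a) ⬝ᵥ (b - a) + (M *ᵥ b ⬝ᵥ b - M *ᵥ a ⬝ᵥ a)) / 2 := by
  have := hM.mulVec_dotProduct_comm a b
  simp only [mulVec_sub, sub_dotProduct, dotProduct_sub]
  linarith

variable [DecidableEq ι]

open scoped ComplexOrder in
theorem Matrix.PosSemidef.sqrt_isHermitian {𝕜 : Type*} [RCLike 𝕜] {M : Matrix ι ι 𝕜}
    (hM : M.PosSemidef) : hM.sqrt.IsHermitian :=
  isHermitian_mul_mul_conjTranspose (hM.1.eigenvectorUnitary : Matrix ι ι 𝕜)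
    (isHermitian_diagonal_of_self_adjoint _ (by ext i; simp))

open scoped ComplexOrder in
theorem Matrix.PosSemidef.sqrt_mul_self {𝕜 : Type*} [RCLike 𝕜] {M : Matrix ι ι 𝕜}
    (hM : M.PosSemidef) : hM.sqrt * hM.sqrt = M := by
  set U : Matrix ι ι 𝕜 := (hM.1.eigenvectorUnitary : Matrix ι ι 𝕜)
  have hU : star U * U = 1 := Unitary.coe_star_mul_self _
  have hD : diagonal ((↑) ∘ (√·) ∘ hM.1.eigenvalues) * diagonal ((↑) ∘ (√·) ∘ hM.1.eigenvalues)
      = diagonal ((↑) ∘ hM.1.eigenvalues : ι → 𝕜) := by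
    rw [diagonal_mul_diagonal]; congr 1; ext i
    simp [← RCLike.ofReal_mul, Real.mul_self_sqrt (hM.eigenvalues_nonneg i)]
  conv_rhs => rw [hM.1.spectral_theorem]
  simp only [Matrix.PosSemidef.sqrt, Unitary.conjStarAlgAut_apply, ← hD, Matrix.mul_assoc]
  rw [← Matrix.mul_assoc (star U) U, hU, Matrix.one_mul]

theorem Matrix.PosSemidef.esq_sqrt_mulVec {M : Matrix ι ι ℝ} (hM : M.PosSemidef) (w : ι → ℝ) :
    esq (hM.sqrt *ᵥ w) = M *ᵥ w ⬝ᵥ w := by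
  rw [esq_eq_dotProduct, dotProduct_mulVec, ← mulVec_transpose,
    isHermitian_iff_isSymm.mp hM.sqrt_isHermitian |>.eq, mulVec_mulVec, hM.sqrt_mul_self]

end QuadraticForm

section Calculus

variable {ι : Type*} [Fintype ι] {f g : ℝ → ι → ℝ} {f' g' : ι → ℝ} {s : ℝ}

theorem HasDerivAt.dotProduct (hf : HasDerivAt f f' s) (hg : HasDerivAt g g' s) :
    HasDerivAt (fun s => f s ⬝ᵥ g s) (f' ⬝ᵥ g s + f s ⬝ᵥ g') s := by
  have h : HasDerivAt (fun s => f s ⬝ᵥ g s) (∑ i, (f' i * g s i + f s i * g' i)) s :=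
    HasDerivAt.fun_sum fun i _ => (hasDerivAt_pi.mp hf i).mul (hasDerivAt_pi.mp hg i)
  rwa [Finset.sum_add_distrib] at h

theorem HasDerivAt.matrix_mulVec (M : Matrix ι ι ℝ) (hg : HasDerivAt g g' s) :
    HasDerivAt (fun s => M *ᵥ g s) (M *ᵥ g') s :=
  M.mulVecLin.toContinuousLinearMap.hasFDerivAt.comp_hasDerivAt s hg

theorem Matrix.IsSymm.hasDerivAt_mulVec_dotProduct_self {M : Matrix ι ι ℝ} (hM : M.IsSymm)
    (hg : HasDerivAt g g' s) :
    HasDerivAt (fun s => M *ᵥ g s ⬝ᵥ g s) (2 * (M *ᵥ g' ⬝ᵥ g s)) s := by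
  convert (hg.matrix_mulVec M).dotProduct hg using 1
  rw [hM.mulVec_dotProduct_comm (g s) g']
  ring

theorem Matrix.IsSymm.integral_mulVec_deriv_dotProduct_self {M : Matrix ι ι ℝ}
    (hM : M.IsSymm) {Z : ℝ → ι → ℝ} (hZ : ContDiff ℝ 1 Z) (a b : ℝ) :
    ∫ s in a..b, M *ᵥ deriv Z s ⬝ᵥ Z s = (M *ᵥ Z b ⬝ᵥ Z b - M *ᵥ Z a ⬝ᵥ Z a) / 2 := by
  have hderiv : ∀ s ∈ uIcc a b,
      HasDerivAt (fun s => (M *ᵥ Z s ⬝ᵥ Z s) / 2) (M *ᵥ deriv Z s ⬝ᵥ Z s) s := fun s _ => by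
    simpa using (hM.hasDerivAt_mulVec_dotProduct_self
      ((hZ.differentiable one_ne_zero).differentiableAt.hasDerivAt (x := s))).div_const 2
  have hZ' : Continuous (deriv Z) := hZ.continuous_deriv le_rfl
  have hZc : Continuous Z := hZ.continuous
  have hcont : Continuous fun s => M *ᵥ deriv Z s ⬝ᵥ Z s := by fun_prop
  rw [intervalIntegral.integral_eq_sub_of_hasDerivAt hderiv (hcont.intervalIntegrable a b)]
  ring

theorem Matrix.IsSymm.integral_dotProduct_self_eq {M A S : Matrix ι ι ℝ} (hM : M.IsSymm)
    (hA : ∀ z, A *ᵥ z ⬝ᵥ z = esq (S *ᵥ z))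
    {Z : ℝ → ι → ℝ} (hZ : ContDiff ℝ 1 Z) (a b : ℝ) :
    ∫ s in a..b, (M *ᵥ deriv Z s + A *ᵥ Z s) ⬝ᵥ Z s
      = (∫ s in a..b, esq (S *ᵥ Z s)) + (M *ᵥ Z b ⬝ᵥ Z b - M *ᵥ Z a ⬝ᵥ Z a) / 2 := by
  have hZ' : Continuous (deriv Z) := hZ.continuous_deriv le_rfl
  have hZc : Continuous Z := hZ.continuous
  have hstorage : Continuous fun s => M *ᵥ deriv Z s ⬝ᵥ Z s := by fun_prop
  have hdissip : Continuous fun s => esq (S *ᵥ Z s) := by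
    simp only [esq_eq_dotProduct]; fun_prop
  simp only [add_dotProduct, hA]
  rw [intervalIntegral.integral_add (hstorage.intervalIntegrable a b)
      (hdissip.intervalIntegrable a b),
    hM.integral_mulVec_deriv_dotProduct_self hZ]
  ring

end Calculus

theorem sum_Icc_sub_add_sum_Icc_sub (a b : ℕ → ℝ) {N : ℕ} (hN : 1 ≤ N) :
    ∑ n ∈ Icc 1 N, (b n - a n) + ∑ n ∈ Icc 1 (N - 1), (a (n + 1) - b n) = b N - a 1 := by
  induction N, hN using Nat.le_induction with
  | base => simp
  | succ N hN ih =>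
    rw [Nat.add_sub_cancel, sum_Icc_succ_top (by omega)]
    obtain ⟨M, rfl⟩ : ∃ M, N = M + 1 := ⟨N - 1, by omega⟩
    rw [sum_Icc_succ_top (f := fun n => a (n + 1) - b n) (by omega)]
    rw [Nat.add_sub_cancel] at ih
    linarith

theorem fromBlocks_zero_neg_transpose_mulVec_dotProduct_self {m n : Type*} [Fintype m]
    [Fintype n] (C : Matrix n m ℝ) (D : Matrix n n ℝ) (z : m ⊕ n → ℝ) :
    fromBlocks 0 (-Cᵀ) C D *ᵥ z ⬝ᵥ z = D *ᵥ (z ∘ Sum.inr) ⬝ᵥ (z ∘ Sum.inr) := by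
  obtain ⟨x, y, rfl⟩ : ∃ x y, z = Sum.elim x y := ⟨_, _, (Sum.elim_comp_inl_inr z).symm⟩
  simp only [fromBlocks_mulVec, Sum.elim_comp_inl, Sum.elim_comp_inr, sumElim_dotProduct_sumElim,
    zero_mulVec, zero_add, neg_mulVec, neg_dotProduct, add_dotProduct, mulVec_transpose,
    ← dotProduct_mulVec, dotProduct_comm y]
  ring

theorem esq_fromBlocks_zero_zero_zero_mulVec {m n : Type*} [Fintype m] [Fintype n]
    (S : Matrix n n ℝ) (z : m ⊕ n → ℝ) :
    esq (fromBlocks (0 : Matrix m m ℝ) 0 0 S *ᵥ z) = esq (S *ᵥ (z ∘ Sum.inr)) := by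
  simp [fromBlocks_mulVec, esq, Fintype.sum_sum_type]

theorem dgBilin_self_eq_dgNormSq {d N : ℕ}
    {Ktil Amat Ltil Ksqrt : Matrix (Fin d ⊕ Fin d) (Fin d ⊕ Fin d) ℝ}
    (hKtil : Ktil.IsSymm) (hAmat : ∀ z, Amat *ᵥ z ⬝ᵥ z = esq (Ltil *ᵥ z))
    (hKsqrt : ∀ v, esq (Ksqrt *ᵥ v) = Ktil *ᵥ v ⬝ᵥ v) (hN : 1 ≤ N) (t : ℕ → ℝ)
    (Z : ℕ → ℝ → (Fin d ⊕ Fin d) → ℝ) (hZ : ∀ n ∈ Finset.Icc 1 N, ContDiff ℝ 1 (Z n)) :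
    dgBilin Ktil Amat N t Z Z = dgNormSq Ltil Ksqrt N t Z := by
  let q v := Ktil *ᵥ v ⬝ᵥ v
  have slab : ∀ n ∈ Finset.Icc 1 N,
      ∫ s in t (n - 1)..t n, (Ktil *ᵥ deriv (Z n) s + Amat *ᵥ Z n s) ⬝ᵥ Z n s
        = (∫ s in t (n - 1)..t n, esq (Ltil *ᵥ Z n s))
          + (q (Z n (t n)) - q (Z n (t (n - 1)))) / 2 :=
    fun n hn => hKtil.integral_dotProduct_self_eq hAmat (hZ n hn) _ _
  have jump : ∀ n ∈ Finset.Icc 1 (N - 1),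
      Ktil *ᵥ (Z (n + 1) (t n) - Z n (t n)) ⬝ᵥ Z (n + 1) (t n)
        = (esq (Ksqrt *ᵥ (Z (n + 1) (t n) - Z n (t n)))
          + (q (Z (n + 1) (t n)) - q (Z n (t n)))) / 2 :=
    fun n _ => by rw [hKsqrt]; exact hKtil.mulVec_sub_dotProduct _ _
  have telescope := sum_Icc_sub_add_sum_Icc_sub (fun n => q (Z n (t (n - 1))))
    (fun n => q (Z n (t n))) hN
  simp only [Nat.add_sub_cancel, Nat.sub_self] at telescope
  rw [dgBilin, dgNormSq, sum_congr rfl slab, sum_congr rfl jump, sum_add_distrib, ← sum_div,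
    ← sum_div, sum_add_distrib, hKsqrt, hKsqrt]
  linarith

theorem stmt_2_general {d N : ℕ} (hN : 1 ≤ N)
    (P L K : Matrix (Fin d) (Fin d) ℝ) (hL : L.PosDef) (hK : K.PosDef)
    (hKP : (Matrix.fromBlocks K 0 0 P).PosDef)
    (t : ℕ → ℝ)
    (Z : ℕ → ℝ → (Fin d ⊕ Fin d) → ℝ)
    (hZ : ∀ n ∈ Finset.Icc 1 N, ContDiff ℝ 1 (Z n)) :
    dgBilin (Matrix.fromBlocks K 0 0 P) (Matrix.fromBlocks 0 (-K) K L) N t Z Z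
      = dgNormSq (Matrix.fromBlocks 0 0 0 hL.posSemidef.sqrt)
          hKP.posSemidef.sqrt N t Z := by
  refine dgBilin_self_eq_dgNormSq (isHermitian_iff_isSymm.mp hKP.isHermitian) (fun z => ?_)
    hKP.posSemidef.esq_sqrt_mulVec hN t Z hZ
  have hskew := fromBlocks_zero_neg_transpose_mulVec_dotProduct_self K L z
  rw [(isHermitian_iff_isSymm.mp hK.isHermitian).eq] at hskew
  rw [hskew, esq_fromBlocks_zero_zero_zero_mulVec, hL.posSemidef.esq_sqrt_mulVec]

/-- With `P, L, K` symmetric positive definite,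
`K̃ = [[K,0],[0,P]]`, `A = [[0,−K],[K,L]]`, `L̃ = [[0,0],[0,L^{1/2}]]`, and a partition
`0 = t₀ < ⋯ < t_N = T`, every function `z` whose restriction to each closed slab extends
to a continuously differentiable function (represented by the extensions `Z n`) satisfies
the coercivity identity `A(z,z) = |||z|||²`. -/
theorem stmt_2 {d N : ℕ} (hN : 1 ≤ N)
    (P L K : Matrix (Fin d) (Fin d) ℝ) (hP : P.PosDef) (hL : L.PosDef) (hK : K.PosDef)
    (hKP : (Matrix.fromBlocks K 0 0 P).PosDef)
    (T : ℝ) (hT : 0 < T) (t : ℕ → ℝ) (ht0 : t 0 = 0) (htN : t N = T)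
    (hmono : ∀ n < N, t n < t (n+1))
    (Z : ℕ → ℝ → (Fin d ⊕ Fin d) → ℝ)
    (hZ : ∀ n ∈ Finset.Icc 1 N, ContDiff ℝ 1 (Z n)) :
    dgBilin (Matrix.fromBlocks K 0 0 P) (Matrix.fromBlocks 0 (-K) K L) N t Z Z
      = dgNormSq (Matrix.fromBlocks 0 0 0 hL.posSemidef.sqrt)
          hKP.posSemidef.sqrt N t Z :=
  stmt_2_general hN P L K hL hK hKP t Z hZ
end

section
/- Let 0 = t₀ < t₁ < ⋯ < t_N = T be a partition of [0,T], r₁,…,r_N ∈ ℕ, and let u : (0,T] → ℝ^d be such that u restricted to each slab I_n = (t_{n−1}, t_n] is (componentwise) a polynomial of degree ≤ r_n. Suppose that: (i) for every n = 1,…,N and every polynomial test function v of degree ≤ r_n with values in ℝ^d, ∫_{I_n} u̇ · v dt + [u]_{n−1} · v(t_{n−1}^+) = 0, where [u]_0 = u(0^+) − u₀⁻ for a prescribed left value u₀⁻ ∈ ℝ^d; (ii) [u]_n = 0 for n = 1,…,N−1; (iii) u(T^−) = 0; and (iv) [u]_0 = 0. Then u ≡ 0 on (0,T] (and u₀⁻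 = 0). -/
open Matrix MeasureTheory Set

/-- `v : ℝ → ℝ^d` is (componentwise) a polynomial of degree at most `r`. -/
def IsPolyDeg {d : ℕ} (r : ℕ) (v : ℝ → Fin d → ℝ) : Prop :=
  ∀ i, ∃ p : Polynomial ℝ, p.natDegree ≤ r ∧ ∀ s, v s i = p.eval s

/-!
Testing the slab equation with `v = u̇` kills the jump term (the jumps vanish by (ii) and (iv)),
leaving `∫_{Iₙ} |u̇|² = 0`; a polynomial derivative vanishing on a slab vanishes identically, so
`u` is constant on every slab. Continuity across the nodes then carries `u(T⁻) = 0` back through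
all slabs down to `u₀⁻`.
-/

theorem eqOn_zero_of_intervalIntegral_eq_zero {f : ℝ → ℝ} {a b : ℝ} (hab : a < b)
    (hf : ContinuousOn f (Icc a b)) (hf_nonneg : ∀ x ∈ Icc a b, 0 ≤ f x)
    (h : ∫ x in a..b, f x = 0) : EqOn f 0 (Icc a b) := by
  intro c hc
  by_contra hne
  have hpos := intervalIntegral.integral_lt_integral_of_continuousOn_of_le_of_exists_lt hab
    continuousOn_const hf (fun x hx => hf_nonneg x (Ioc_subset_Icc_self hx))
    ⟨c, hc, (hf_nonneg c hc).lt_of_ne (Ne.symm hne)⟩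
  simp [h] at hpos

namespace IsPolyDeg

variable {d r : ℕ} {v : ℝ → Fin d → ℝ}

theorem differentiable (hv : IsPolyDeg r v) : Differentiable ℝ v :=
  differentiable_pi.2 fun i => by
    obtain ⟨p, -, hp⟩ := hv i
    simpa only [← funext hp] using p.differentiable

theorem continuous (hv : IsPolyDeg r v) : Continuous v :=
  hv.differentiable.continuous

theorem deriv (hv : IsPolyDeg r v) : IsPolyDeg r (deriv v) := by
  intro i
  obtain ⟨p, hdeg, hp⟩ := hv i
  refine ⟨Polynomial.derivative p, (Polynomial.natDegree_derivative_le p).trans (by omega),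
    fun s => ?_⟩
  rw [deriv_pi fun j => differentiableAt_pi.1 (hv.differentiable s) j]
  change _root_.deriv (fun x => v x i) s = _
  rw [show (fun x => v x i) = fun x => p.eval x from funext hp, Polynomial.deriv]

theorem eq_zero_of_eqOn_Icc (hv : IsPolyDeg r v) {a b : ℝ} (hab : a < b)
    (h : EqOn v 0 (Icc a b)) : v = 0 := by
  funext s i
  obtain ⟨p, -, hp⟩ := hv i
  have hp_zero : p = 0 := p.eq_zero_of_infinite_isRoot <| (Icc_infinite hab).mono fun x hx => by
    simpa [Polynomial.IsRoot, hp] using congrFun (h hx) i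
  simp [hp, hp_zero]

theorem eq_of_integral_deriv_dotProduct_self_eq_zero (hv : IsPolyDeg r v) {a b : ℝ}
    (hab : a < b) (h : ∫ s in a..b, _root_.deriv v s ⬝ᵥ _root_.deriv v s = 0) (x y : ℝ) :
    v x = v y := by
  have hv' := hv.deriv
  have hv'_Icc : EqOn (_root_.deriv v) 0 (Icc a b) := fun s hs =>
    dotProduct_self_eq_zero.1 <| eqOn_zero_of_intervalIntegral_eq_zero hab
      (hv'.continuous.dotProduct hv'.continuous).continuousOn
      (fun s _ => Finset.sum_nonneg fun i _ => mul_self_nonneg _) h hs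
  exact is_const_of_deriv_eq_zero hv.differentiable
    (congrFun (hv'.eq_zero_of_eqOn_Icc hab hv'_Icc)) x y

end IsPolyDeg

theorem eq_zero_of_const_on_pieces_of_last_eq_zero {α β : Type*} [Zero β] {N : ℕ}
    {U : ℕ → α → β} (t : ℕ → α) (hconst : ∀ n ∈ Finset.Icc 1 N, ∀ x y, U n x = U n y)
    (hjump : ∀ n ∈ Finset.Icc 1 (N - 1), U (n + 1) (t n) = U n (t n))
    (hlast : U N (t N) = 0) : ∀ n ∈ Finset.Icc 1 N, ∀ x, U n x = 0 := by
  intro n hn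
  obtain ⟨hn1, hnN⟩ := Finset.mem_Icc.1 hn
  clear hn
  induction hnN using Nat.decreasingInduction with
  | self => exact fun x => (hconst N (Finset.mem_Icc.2 ⟨hn1, le_rfl⟩) x (t N)).trans hlast
  | of_succ k hk ih =>
    intro x
    rw [hconst k (Finset.mem_Icc.2 ⟨hn1, hk.le⟩) x (t k),
      ← hjump k (Finset.mem_Icc.2 ⟨hn1, by omega⟩), ih (by omega)]

theorem stmt_3_general {d N : ℕ} (hN : 1 ≤ N)
    (t : ℕ → ℝ)
    (hmono : ∀ n < N, t n < t (n+1))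
    (r : ℕ → ℕ) (U : ℕ → ℝ → Fin d → ℝ) (u0m : Fin d → ℝ)
    (hpoly : ∀ n ∈ Finset.Icc 1 N, IsPolyDeg (r n) (U n))
    (hweak : ∀ n ∈ Finset.Icc 1 N, ∀ v : ℝ → Fin d → ℝ, IsPolyDeg (r n) v →
      (∫ s in (t (n-1))..(t n), deriv (U n) s ⬝ᵥ v s)
        + (U n (t (n-1)) - (if n = 1 then u0m else U (n-1) (t (n-1)))) ⬝ᵥ v (t (n-1)) = 0)
    (hjump : ∀ n ∈ Finset.Icc 1 (N-1), U (n+1) (t n) = U n (t n))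
    (hTend : U N (t N) = 0)
    (h0 : U 1 (t 0) = u0m) :
    (∀ n ∈ Finset.Icc 1 N, ∀ s ∈ Set.Ioc (t (n-1)) (t n), U n s = 0) ∧ u0m = 0 := by
  have hjump_zero : ∀ n ∈ Finset.Icc 1 N,
      U n (t (n-1)) - (if n = 1 then u0m else U (n-1) (t (n-1))) = 0 := by
    intro n hn
    obtain ⟨hn1, hnN⟩ := Finset.mem_Icc.1 hn
    obtain ⟨m, rfl⟩ : ∃ m, n = m + 1 := ⟨n - 1, by omega⟩
    split_ifs with h1
    · obtain rfl : m = 0 := by omega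
      exact sub_eq_zero.2 h0
    · simpa using sub_eq_zero.2 (hjump m (Finset.mem_Icc.2 ⟨by omega, by omega⟩))
  have hconst : ∀ n ∈ Finset.Icc 1 N, ∀ x y, U n x = U n y := by
    intro n hn
    obtain ⟨hn1, hnN⟩ := Finset.mem_Icc.1 hn
    have hslab : t (n-1) < t n := by simpa [Nat.sub_add_cancel hn1] using hmono (n-1) (by omega)
    refine (hpoly n hn).eq_of_integral_deriv_dotProduct_self_eq_zero hslab ?_
    simpa [hjump_zero n hn] using hweak n hn _ (hpoly n hn).deriv
  have hzero := eq_zero_of_const_on_pieces_of_last_eq_zero t hconst hjump hTend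
  exact ⟨fun n hn s _ => hzero n hn s, h0 ▸ hzero 1 (Finset.mem_Icc.2 ⟨le_rfl, hN⟩) (t 0)⟩

/-- Let `0 = t₀ < ⋯ < t_N = T` and let `u` be slab-wise polynomial of
degree `≤ rₙ` (represented by the polynomial extensions `U n` from the slabs
`Iₙ = (t_{n−1}, tₙ]`).  If
(i) for every `n` and every polynomial test function `v` of degree `≤ rₙ`,
    `∫_{Iₙ} u̇·v dt + [u]_{n−1}·v(t_{n−1}⁺) = 0`, with `[u]₀ = u(0⁺) − u₀⁻`;
(ii) `[u]ₙ = 0` for `n = 1,…,N−1`;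
(iii) `u(T⁻) = 0`; and (iv) `[u]₀ = 0`;
then `u ≡ 0` on `(0,T]` and `u₀⁻ = 0`. -/
theorem stmt_3 {d N : ℕ} (hd : 1 ≤ d) (hN : 1 ≤ N)
    (T : ℝ) (hT : 0 < T) (t : ℕ → ℝ) (ht0 : t 0 = 0) (htN : t N = T)
    (hmono : ∀ n < N, t n < t (n+1))
    (r : ℕ → ℕ) (U : ℕ → ℝ → Fin d → ℝ) (u0m : Fin d → ℝ)
    (hpoly : ∀ n ∈ Finset.Icc 1 N, IsPolyDeg (r n) (U n))
    (hweak : ∀ n ∈ Finset.Icc 1 N, ∀ v : ℝ → Fin d → ℝ, IsPolyDeg (r n) v →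
      (∫ s in (t (n-1))..(t n), deriv (U n) s ⬝ᵥ v s)
        + (U n (t (n-1)) - (if n = 1 then u0m else U (n-1) (t (n-1)))) ⬝ᵥ v (t (n-1)) = 0)
    (hjump : ∀ n ∈ Finset.Icc 1 (N-1), U (n+1) (t n) = U n (t n))
    (hTend : U N (t N) = 0)
    (h0 : U 1 (t 0) = u0m) :
    (∀ n ∈ Finset.Icc 1 N, ∀ s ∈ Set.Ioc (t (n-1)) (t n), U n s = 0) ∧ u0m = 0 :=
  stmt_3_general hN t hmono r U u0m hpoly hweak hjump hTend h0
end

section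
/- With the matrices, partition, DG space V_DG^r, bilinear form A(·,·) and linear functional F(·) as in the context, for any f ∈ L²((0,T]; ℝ^d) and any û₀, û₁ ∈ ℝ^d, the discrete problem 'find z_DG ∈ V_DG^r such that A(z_DG, v) = F(v) for all v ∈ V_DG^r' admits a unique solution. -/
open Matrix MeasureTheory Set

/-- `v : ℝ → ℝ^{2d}` is (componentwise) a polynomial of degree at most `r`. -/
def IsPolyDegV {d : ℕ} (r : ℕ) (v : ℝ → (Fin d ⊕ Fin d) → ℝ) : Prop :=
  ∀ i, ∃ p : Polynomial ℝ, p.natDegree ≤ r ∧ ∀ s, v s i = p.eval s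

/-- The DG right-hand side functional
`F(v) = Σₙ ∫_{Iₙ} F·v dt + (K̃ z₀)·v(0⁺)` with `F = (0, f)`. -/
noncomputable def dgLin {d : ℕ} (Ktil : Matrix (Fin d ⊕ Fin d) (Fin d ⊕ Fin d) ℝ)
    (N : ℕ) (t : ℕ → ℝ) (f : ℝ → Fin d → ℝ) (z0 : (Fin d ⊕ Fin d) → ℝ)
    (V : ℕ → ℝ → (Fin d ⊕ Fin d) → ℝ) : ℝ :=
  (∑ n ∈ Finset.Icc 1 N, ∫ s in (t (n-1))..(t n),
      Sum.elim (0 : Fin d → ℝ) (f s) ⬝ᵥ V n s)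
  + Ktil.mulVec z0 ⬝ᵥ V 1 (t 0)

/-- Membership in the DG space `V_DG^r`: slab-wise polynomial of degree `≤ rₙ`,
admitting a continuous slab-wise polynomial reconstruction `ẑ = (û,ŵ)` with `û′ = ŵ`,
satisfying the reconstruction identity and `ẑ(t_{n−1}) = z(t_{n−1}⁻)` for `n ≥ 2`
(with `z(0⁻) := ẑ(0)` in the jump `[z]₀`). -/
def MemDG {d : ℕ} (N : ℕ) (t : ℕ → ℝ) (r : ℕ → ℕ)
    (Z : ℕ → ℝ → (Fin d ⊕ Fin d) → ℝ) : Prop :=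
  (∀ n ∈ Finset.Icc 1 N, IsPolyDegV (r n) (Z n)) ∧
  ∃ Zh : ℕ → ℝ → (Fin d ⊕ Fin d) → ℝ,
    (∀ n ∈ Finset.Icc 1 N, IsPolyDegV (r n) (Zh n)) ∧
    (∀ n ∈ Finset.Icc 1 (N-1), Zh (n+1) (t n) = Zh n (t n)) ∧
    (∀ n ∈ Finset.Icc 1 N, ∀ s : ℝ,
       deriv (fun τ => fun i => Zh n τ (Sum.inl i)) s = fun i => Zh n s (Sum.inr i)) ∧
    (∀ n ∈ Finset.Icc 1 N, ∀ v : ℝ → (Fin d ⊕ Fin d) → ℝ, IsPolyDegV (r n) v →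
       (∫ s in (t (n-1))..(t n), deriv (Zh n) s ⬝ᵥ v s)
         = (∫ s in (t (n-1))..(t n), deriv (Z n) s ⬝ᵥ v s)
           + (Z n (t (n-1)) - (if n = 1 then Zh 1 (t 0) else Z (n-1) (t (n-1))))
              ⬝ᵥ v (t (n-1))) ∧
    (∀ n ∈ Finset.Icc 2 N, Zh n (t (n-1)) = Z (n-1) (t (n-1)))

/-!
Every `z ∈ V_DG` coincides with its reconstruction `ẑ`: testing the reconstruction identity on a
slab `(a, b]` first with `v = (t - a) (ẑ - z)'` and then with `v = ẑ - z` forces `ẑ = z`. Hence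
`V_DG` is the finite-dimensional space of continuous, slab-wise polynomial `z = (u, w)` with
`u' = w`, on which all jumps vanish. For such `z`, symmetry of `K̃` and skew-symmetry of the
off-diagonal blocks of `A` give the energy identity
`2 A(z, z) = K̃ z(T)·z(T) + K̃ z(0)·z(0) + 2 ∫₀ᵀ L w·w`,
so `A(z, z) = 0` forces `w = 0` and `z(0) = 0`, hence `z = 0`. On a finite-dimensional space such
a bilinear form identifies the space with its dual, which gives existence and uniqueness.
-/

open Polynomial

theorem LinearMap.BilinForm.existsUnique_eq_of_anisotropic {K V : Type*} [Field K]
    [AddCommGroup V] [Module K V] [FiniteDimensional K V] (B : LinearMap.BilinForm K V)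
    (hB : ∀ x, B x x = 0 → x = 0) (F : Module.Dual K V) : ∃! x, B x = F :=
  (B.toDual (.ofSeparatingLeft (separatingLeft_of_anisotropic hB))).bijective.existsUnique F

theorem Finset.sum_Icc_one_sub_telescope {M : Type*} [AddCommGroup M] {N : ℕ} (hN : 1 ≤ N)
    (e e' : ℕ → M) (h : ∀ n ∈ Icc 1 (N - 1), e' (n + 1) = e n) :
    ∑ n ∈ Icc 1 N, (e n - e' n) = e N - e' 1 := by
  induction N, hN using Nat.le_induction with
  | base => simp
  | succ N hN ih =>
    rw [sum_Icc_succ_top (by omega), ih fun n hn ↦ h n (by simp at hn ⊢; omega),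
      h N (by simp; omega)]
    abel

theorem apply_sub_one_lt_of_mem_Icc {t : ℕ → ℝ} {N n : ℕ} (hmono : ∀ n < N, t n < t (n + 1))
    (hn : n ∈ Finset.Icc 1 N) : t (n - 1) < t n := by
  simp only [Finset.mem_Icc] at hn
  simpa [Nat.sub_add_cancel hn.1] using hmono (n - 1) (by omega)

namespace Matrix

variable {m n R : Type*}

theorem PosDef.transpose_eq {M : Matrix n n ℝ} (hM : M.PosDef) : Mᵀ = M :=
  isHermitian_iff_isSymm.1 hM.1

variable [Fintype m] [Fintype n]

theorem dotProduct_fromBlocks_skew_mulVec [CommRing R] {K : Matrix n n R} (hK : Kᵀ = K)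
    (L : Matrix n n R) (x : n ⊕ n → R) :
    x ⬝ᵥ fromBlocks 0 (-K) K L *ᵥ x = x ∘ Sum.inr ⬝ᵥ L *ᵥ (x ∘ Sum.inr) := by
  rw [← Sum.elim_comp_inl_inr x, fromBlocks_mulVec, dotProduct_block]
  simp only [Sum.elim_comp_inl, Sum.elim_comp_inr, zero_mulVec, zero_add, neg_mulVec,
    dotProduct_add, dotProduct_neg]
  rw [← hK, dotProduct_transpose_mulVec, hK]
  ring

theorem PosDef.fromBlocks_zero [CommRing R] [PartialOrder R] [StarRing R] [StarOrderedRing R]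
    {A : Matrix m m R} {D : Matrix n n R} (hA : A.PosDef) (hD : D.PosDef) :
    (fromBlocks A 0 0 D).PosDef := by
  refine .of_dotProduct_mulVec_pos (hA.1.fromBlocks (by simp) hD.1) fun x hx ↦ ?_
  rw [fromBlocks_mulVec, dotProduct_block]
  simp only [Sum.elim_comp_inl, Sum.elim_comp_inr, zero_mulVec, add_zero, zero_add]
  change 0 < star (x ∘ Sum.inl) ⬝ᵥ _ + star (x ∘ Sum.inr) ⬝ᵥ _
  rcases eq_or_ne (x ∘ Sum.inl) 0 with hl | hl
  · have hr : x ∘ Sum.inr ≠ 0 := fun hr ↦ hx (funext (Sum.rec (congrFun hl) (congrFun hr)))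
    simpa [hl] using hD.dotProduct_mulVec_pos hr
  · exact add_pos_of_pos_of_nonneg (hA.dotProduct_mulVec_pos hl)
      (hD.posSemidef.dotProduct_mulVec_nonneg _)

theorem PosDef.dotProduct_mulVec_self_eq_zero_iff {M : Matrix n n ℝ} (hM : M.PosDef)
    {x : n → ℝ} : x ⬝ᵥ M *ᵥ x = 0 ↔ x = 0 := by
  refine ⟨fun h ↦ by_contra fun hx ↦ ?_, fun h ↦ by simp [h]⟩
  simpa [h] using hM.dotProduct_mulVec_pos hx

end Matrix

namespace Polynomial

section Vectors

variable {R ι : Type*} [CommSemiring R] [Fintype ι]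

theorem eval_dotProduct (s : R) (v w : ι → R[X]) :
    (v ⬝ᵥ w).eval s = eval s ∘ v ⬝ᵥ eval s ∘ w :=
  RingHom.map_dotProduct (evalRingHom s) v w

theorem eval_comp_mulVec_map_C (s : R) (M : Matrix ι ι R) (v : ι → R[X]) :
    eval s ∘ (M.map C *ᵥ v) = M *ᵥ eval s ∘ v := by
  ext i
  simp [Matrix.mulVec, dotProduct, eval_finsetSum]

theorem derivative_dotProduct (v w : ι → R[X]) :
    derivative (v ⬝ᵥ w) = derivative ∘ v ⬝ᵥ w + v ⬝ᵥ derivative ∘ w := by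
  simp [dotProduct, derivative_mul, Finset.sum_add_distrib]

theorem derivative_comp_mulVec_map_C (M : Matrix ι ι R) (v : ι → R[X]) :
    derivative ∘ (M.map C *ᵥ v) = M.map C *ᵥ derivative ∘ v := by
  ext i : 1
  simp [Matrix.mulVec, dotProduct]

end Vectors

theorem eq_zero_of_derivative_eq_zero_of_eval_eq_zero {R : Type*} [CommRing R]
    [IsAddTorsionFree R] {p : R[X]} {a : R} (hp : derivative p = 0) (ha : p.eval a = 0) :
    p = 0 := by
  rw [eq_C_of_derivative_eq_zero hp] at ha ⊢
  rw [eval_C] at ha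
  rw [ha, map_zero]

theorem eq_zero_of_intervalIntegral_eq_zero {p : ℝ[X]} {a b : ℝ} (hab : a < b)
    (hp : ∀ s ∈ Ioc a b, 0 ≤ p.eval s) (h : ∫ s in a..b, p.eval s = 0) : p = 0 := by
  by_contra hp0
  have hnull : volume (Ioc a b ∩ {s | p.eval s ≠ 0}) = 0 := by
    rw [intervalIntegral.integral_eq_zero_iff_of_le_of_nonneg_ae hab.le
      ((ae_restrict_iff' measurableSet_Ioc).2 (.of_forall hp))
      (p.continuous.intervalIntegrable a b), Filter.EventuallyEq,
      ae_restrict_iff' measurableSet_Ioc, ae_iff] at h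
    refine measure_mono_null ?_ h
    intro s ⟨hs, hps⟩ hs'
    exact hps (hs' hs)
  have hcover : Ioc a b ⊆ (Ioc a b ∩ {s | p.eval s ≠ 0}) ∪ p.roots.toFinset := by
    intro s hs
    by_cases hps : p.eval s = 0
    · exact Or.inr (by simpa [hp0] using hps)
    · exact Or.inl ⟨hs, hps⟩
  have hIoc := measure_mono_null hcover
    (measure_union_null hnull ((Finset.finite_toSet _).measure_zero _))
  rw [Real.volume_Ioc, ENNReal.ofReal_eq_zero] at hIoc
  linarith

noncomputable def lintervalIntegral (a b : ℝ) : ℝ[X] →ₗ[ℝ] ℝ where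
  toFun p := ∫ s in a..b, p.eval s
  map_add' p q := by
    simpa only [eval_add] using intervalIntegral.integral_add
      (p.continuous.intervalIntegrable a b) (q.continuous.intervalIntegrable a b)
  map_smul' c p := by
    simp only [eval_smul, smul_eq_mul, RingHom.id_apply, intervalIntegral.integral_const_mul]

theorem lintervalIntegral_apply (a b : ℝ) (p : ℝ[X]) :
    lintervalIntegral a b p = ∫ s in a..b, p.eval s :=
  rfl

theorem lintervalIntegral_derivative (a b : ℝ) (p : ℝ[X]) :
    lintervalIntegral a b (derivative p) = p.eval b - p.eval a :=
  intervalIntegral.integral_eq_sub_of_hasDerivAt (fun s _ ↦ p.hasDerivAt s)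
    (p.derivative.continuous.intervalIntegrable a b)

variable {ι : Type*} [Fintype ι]

theorem deriv_eval_comp (q : ι → ℝ[X]) (s : ℝ) :
    deriv (fun τ ↦ eval τ ∘ q) s = eval s ∘ derivative ∘ q :=
  (hasDerivAt_pi.2 fun i ↦ (q i).hasDerivAt s).deriv

theorem lintervalIntegral_comp_derivative_dotProduct (a b : ℝ) (p v : ι → ℝ[X]) :
    lintervalIntegral a b (derivative ∘ p ⬝ᵥ v)
      = ∫ s in a..b, deriv (fun τ ↦ eval τ ∘ p) s ⬝ᵥ eval s ∘ v := by
  simp only [lintervalIntegral_apply, eval_dotProduct, deriv_eval_comp]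

theorem dotProduct_self_eq_zero_iff {w : ι → ℝ[X]} : w ⬝ᵥ w = 0 ↔ w = 0 := by
  refine ⟨fun h ↦ ?_, fun h ↦ by simp [h]⟩
  ext i : 1
  refine Polynomial.funext fun s ↦ ?_
  have hs : eval s ∘ w ⬝ᵥ eval s ∘ w = 0 := by rw [← eval_dotProduct, h, eval_zero]
  simpa using congrFun (dotProduct_self_eq_zero.1 hs) i

theorem eq_of_reconstruction_identity {a b : ℝ} (hab : a < b) {r : ℕ} {p q : ι → ℝ[X]}
    (hp : ∀ i, (p i).natDegree ≤ r) (hq : ∀ i, (q i).natDegree ≤ r)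
    (h : ∀ v : ι → ℝ[X], (∀ i, (v i).natDegree ≤ r) →
      lintervalIntegral a b (derivative ∘ p ⬝ᵥ v)
        = lintervalIntegral a b (derivative ∘ q ⬝ᵥ v) + (eval a ∘ q - eval a ∘ p) ⬝ᵥ eval a ∘ v) :
    p = q := by
  set e := p - q
  have he : ∀ i, (e i).natDegree ≤ r := fun i ↦
    (natDegree_sub_le _ _).trans (max_le (hp i) (hq i))
  have key : ∀ v : ι → ℝ[X], (∀ i, (v i).natDegree ≤ r) →
      lintervalIntegral a b (derivative ∘ e ⬝ᵥ v) + eval a ∘ e ⬝ᵥ eval a ∘ v = 0 := by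
    intro v hv
    have hde : derivative ∘ e = derivative ∘ p - derivative ∘ q :=
      map_sub (derivative.compLeft ι) p q
    have hea : eval a ∘ e = eval a ∘ p - eval a ∘ q := map_sub ((leval a).compLeft ι) p q
    rw [hde, hea, sub_dotProduct, map_sub, h v hv, sub_dotProduct, sub_dotProduct]
    ring
  -- the test function `(X - a) e'` kills the boundary term and leaves `∫ (s - a) |e'(s)|² = 0`
  have hde : derivative ∘ e = 0 := by
    set v : ι → ℝ[X] := (X - C a) • (derivative ∘ e)
    have hv : ∀ i, (v i).natDegree ≤ r := by
      intro i
      by_cases hi : (e i).natDegree = 0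
      · simp [v, derivative_eq_zero.2 hi]
      · have := natDegree_derivative_lt hi
        have := he i
        refine natDegree_mul_le.trans ?_
        rw [natDegree_X_sub_C, Function.comp_apply]
        omega
    have hint := key v hv
    have hva : eval a ∘ v = 0 := by ext; simp [v]
    rw [hva, dotProduct_zero, add_zero, dotProduct_smul, smul_eq_mul] at hint
    have hpoly := eq_zero_of_intervalIntegral_eq_zero hab (fun s hs ↦ by
      rw [eval_mul, eval_dotProduct]
      exact mul_nonneg (by simp [hs.1.le]) (dotProduct_self_star_nonneg _)) hint
    rwa [mul_eq_zero, or_iff_right (X_sub_C_ne_zero a), dotProduct_comm,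
      dotProduct_self_eq_zero_iff] at hpoly
  have hea : eval a ∘ e = 0 := by
    have hkey := key e he
    rw [hde, zero_dotProduct, map_zero, zero_add] at hkey
    exact dotProduct_self_eq_zero.1 hkey
  rw [← sub_eq_zero]
  ext i : 1
  exact eq_zero_of_derivative_eq_zero_of_eval_eq_zero (congrFun hde i) (congrFun hea i)

end Polynomial

theorem intervalIntegrable_of_integrableOn_Ioc {E : Type*} [NormedAddCommGroup E] {f : ℝ → E}
    {T : ℝ} {N : ℕ} {t : ℕ → ℝ} (hf : IntegrableOn f (Ioc 0 T)) (ht0 : t 0 = 0)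
    (htN : t N = T) (hmono : ∀ n < N, t n < t (n + 1)) {n : ℕ} (hn : n ∈ Finset.Icc 1 N) :
    IntervalIntegrable f volume (t (n - 1)) (t n) := by
  have hmon : MonotoneOn t (Iic N) :=
    monotoneOn_of_le_add_one ordConnected_Iic fun a _ _ ha ↦ (hmono a (by simp at ha; omega)).le
  have hlt := apply_sub_one_lt_of_mem_Icc hmono hn
  simp only [Finset.mem_Icc] at hn
  refine (intervalIntegrable_iff_integrableOn_Ioc_of_le hlt.le).2
    (hf.mono_set (Ioc_subset_Ioc ?_ ?_))
  · rw [← ht0]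
    exact hmon (by simp) (by simp; omega) (Nat.zero_le _)
  · rw [← htN]
    exact hmon (by simp; omega) (by simp) hn.2

theorem IntervalIntegrable.sumElim_zero_dotProduct {d : ℕ} {f : ℝ → Fin d → ℝ} {a b : ℝ}
    (hf : IntervalIntegrable f volume a b) {v : ℝ → Fin d ⊕ Fin d → ℝ} (hv : Continuous v) :
    IntervalIntegrable (fun s ↦ Sum.elim 0 (f s) ⬝ᵥ v s) volume a b := by
  simp only [dotProduct, Fintype.sum_sum_type, Sum.elim_inl, Pi.zero_apply, zero_mul,
    Finset.sum_const_zero, zero_add, Sum.elim_inr]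
  have hfi : ∀ i, IntervalIntegrable (f · i) volume a b := fun i ↦ ⟨hf.1.eval i, hf.2.eval i⟩
  have hterm : ∀ i, IntervalIntegrable (fun s ↦ f s i * v s (Sum.inr i)) volume a b := fun i ↦
    (hfi i).mul_continuousOn ((continuous_apply (Sum.inr i)).comp hv).continuousOn
  exact ⟨integrable_finsetSum _ fun i _ ↦ (hterm i).1, integrable_finsetSum _ fun i _ ↦ (hterm i).2⟩

noncomputable section SlabData

variable {ι : Type*}

def evalSlab : (ℕ → ι → ℝ[X]) →ₗ[ℝ] ℕ → ℝ → ι → ℝ where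
  toFun Q n s := eval s ∘ Q n
  map_add' Q R := by ext; simp
  map_smul' c Q := by ext; simp

theorem evalSlab_apply (Q : ℕ → ι → ℝ[X]) (n : ℕ) (s : ℝ) : evalSlab Q n s = eval s ∘ Q n :=
  rfl

variable [Fintype ι]

theorem deriv_evalSlab (Q : ℕ → ι → ℝ[X]) (n : ℕ) (s : ℝ) :
    deriv (evalSlab Q n) s = eval s ∘ derivative ∘ Q n :=
  deriv_eval_comp (Q n) s

def dgIntegrand (Kt Am : Matrix ι ι ℝ) : (ι → ℝ[X]) →ₗ[ℝ] (ι → ℝ[X]) →ₗ[ℝ] ℝ[X] :=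
  LinearMap.mk₂ ℝ (fun q v ↦ (Kt.map C *ᵥ derivative.compLeft ι q + Am.map C *ᵥ q) ⬝ᵥ v)
    (fun q q' v ↦ by simp only [map_add, mulVec_add, add_dotProduct]; abel)
    (fun c q v ↦ by simp only [map_smul, mulVec_smul, ← smul_add, smul_dotProduct])
    (fun q v v' ↦ dotProduct_add _ _ _)
    (fun c q v ↦ dotProduct_smul _ _ _)

theorem eval_dgIntegrand (Kt Am : Matrix ι ι ℝ) (q v : ι → ℝ[X]) (s : ℝ) :
    (dgIntegrand Kt Am q v).eval s
      = (Kt *ᵥ eval s ∘ derivative ∘ q + Am *ᵥ eval s ∘ q) ⬝ᵥ eval s ∘ v := by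
  simp only [dgIntegrand, LinearMap.mk₂_apply, add_dotProduct, eval_add, eval_dotProduct,
    eval_comp_mulVec_map_C]
  rfl

theorem two_mul_dgIntegrand_self {n : Type*} [Fintype n] {Kt : Matrix (n ⊕ n) (n ⊕ n) ℝ}
    (hKt : Ktᵀ = Kt) {K : Matrix n n ℝ} (hK : Kᵀ = K) (L : Matrix n n ℝ) (q : n ⊕ n → ℝ[X]) :
    2 * dgIntegrand Kt (fromBlocks 0 (-K) K L) q q
      = derivative (q ⬝ᵥ Kt.map C *ᵥ q) + 2 * (q ∘ Sum.inr ⬝ᵥ L.map C *ᵥ (q ∘ Sum.inr)) := by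
  have hKt' : (Kt.map C)ᵀ = Kt.map C := by rw [← transpose_map, hKt]
  have hK' : (K.map C)ᵀ = K.map C := by rw [← transpose_map, hK]
  have hskew : (fromBlocks 0 (-K) K L).map C *ᵥ q ⬝ᵥ q
      = q ∘ Sum.inr ⬝ᵥ L.map C *ᵥ (q ∘ Sum.inr) := by
    rw [dotProduct_comm, fromBlocks_map, Matrix.map_zero _ (map_zero C),
      Matrix.map_neg _ (map_neg C), dotProduct_fromBlocks_skew_mulVec hK']
  have hsymm : derivative ∘ q ⬝ᵥ Kt.map C *ᵥ q = Kt.map C *ᵥ derivative ∘ q ⬝ᵥ q := by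
    rw [← hKt', dotProduct_transpose_mulVec, hKt', dotProduct_comm]
  change 2 * ((Kt.map C *ᵥ derivative ∘ q + _) ⬝ᵥ q) = _
  rw [add_dotProduct, hskew, derivative_dotProduct, derivative_comp_mulVec_map_C, hsymm,
    dotProduct_comm q]
  ring

end SlabData

noncomputable section DGForms

variable {d : ℕ}

theorem dgBilin_evalSlab (Kt Am : Matrix (Fin d ⊕ Fin d) (Fin d ⊕ Fin d) ℝ) (N : ℕ)
    (t : ℕ → ℝ) (Q R : ℕ → Fin d ⊕ Fin d → ℝ[X]) :
    dgBilin Kt Am N t (evalSlab Q) (evalSlab R) =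
      (∑ n ∈ Finset.Icc 1 N, lintervalIntegral (t (n - 1)) (t n) (dgIntegrand Kt Am (Q n) (R n)))
      + (∑ n ∈ Finset.Icc 1 (N - 1),
          Kt *ᵥ (evalSlab Q (n + 1) (t n) - evalSlab Q n (t n)) ⬝ᵥ evalSlab R (n + 1) (t n))
      + Kt *ᵥ evalSlab Q 1 (t 0) ⬝ᵥ evalSlab R 1 (t 0) := by
  simp only [dgBilin, lintervalIntegral_apply, eval_dgIntegrand, deriv_evalSlab, evalSlab_apply]

def dgBilinForm (Kt Am : Matrix (Fin d ⊕ Fin d) (Fin d ⊕ Fin d) ℝ) (N : ℕ) (t : ℕ → ℝ) :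
    LinearMap.BilinForm ℝ (ℕ → Fin d ⊕ Fin d → ℝ[X]) :=
  LinearMap.mk₂ ℝ (fun Q R ↦ dgBilin Kt Am N t (evalSlab Q) (evalSlab R))
    (fun Q Q' R ↦ by
      simp only [dgBilin_evalSlab]
      simp only [map_add, Pi.add_apply, LinearMap.add_apply, add_sub_add_comm, mulVec_add,
        add_dotProduct, Finset.sum_add_distrib]
      ring)
    (fun c Q R ↦ by
      simp only [dgBilin_evalSlab]
      simp only [map_smul, Pi.smul_apply, LinearMap.smul_apply, ← smul_sub, mulVec_smul,
        smul_dotProduct, smul_eq_mul, ← Finset.mul_sum]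
      ring)
    (fun Q R R' ↦ by
      simp only [dgBilin_evalSlab]
      simp only [map_add, Pi.add_apply, dotProduct_add, Finset.sum_add_distrib]
      ring)
    (fun c Q R ↦ by
      simp only [dgBilin_evalSlab]
      simp only [map_smul, Pi.smul_apply, dotProduct_smul, smul_eq_mul, ← Finset.mul_sum]
      ring)

def dgLinForm (Kt : Matrix (Fin d ⊕ Fin d) (Fin d ⊕ Fin d) ℝ) (N : ℕ) (t : ℕ → ℝ)
    (f : ℝ → Fin d → ℝ) (z0 : Fin d ⊕ Fin d → ℝ)
    (hf : ∀ n ∈ Finset.Icc 1 N, IntervalIntegrable f volume (t (n - 1)) (t n)) :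
    Module.Dual ℝ (ℕ → Fin d ⊕ Fin d → ℝ[X]) where
  toFun R := dgLin Kt N t f z0 (evalSlab R)
  map_add' R R' := by
    have hint : ∀ R : ℕ → Fin d ⊕ Fin d → ℝ[X], ∀ n ∈ Finset.Icc 1 N, IntervalIntegrable
        (fun s ↦ Sum.elim 0 (f s) ⬝ᵥ evalSlab R n s) volume (t (n - 1)) (t n) := fun R n hn ↦
      (hf n hn).sumElim_zero_dotProduct (continuous_pi fun i ↦ (R n i).continuous)
    simp only [dgLin, map_add, Pi.add_apply, dotProduct_add]
    rw [Finset.sum_congr rfl fun n hn ↦ intervalIntegral.integral_add (hint R n hn) (hint R' n hn),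
      Finset.sum_add_distrib]
    ring
  map_smul' c R := by
    simp only [dgLin, map_smul, Pi.smul_apply, dotProduct_smul, smul_eq_mul,
      intervalIntegral.integral_const_mul, ← Finset.mul_sum, RingHom.id_apply]
    ring

theorem dgBilin_congr {N : ℕ} {t : ℕ → ℝ} (hN : 1 ≤ N)
    (Kt Am : Matrix (Fin d ⊕ Fin d) (Fin d ⊕ Fin d) ℝ)
    {Z Z' V V' : ℕ → ℝ → Fin d ⊕ Fin d → ℝ} (hZ : ∀ n ∈ Finset.Icc 1 N, Z n = Z' n)
    (hV : ∀ n ∈ Finset.Icc 1 N, V n = V' n) :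
    dgBilin Kt Am N t Z V = dgBilin Kt Am N t Z' V' := by
  have h1 : 1 ∈ Finset.Icc 1 N := by simp [hN]
  have hsucc : ∀ n ∈ Finset.Icc 1 (N - 1), n ∈ Finset.Icc 1 N ∧ n + 1 ∈ Finset.Icc 1 N :=
    fun n hn ↦ by simp at hn ⊢; omega
  unfold dgBilin
  congr 2
  · exact Finset.sum_congr rfl fun n hn ↦ by rw [hZ n hn, hV n hn]
  · refine Finset.sum_congr rfl fun n hn ↦ ?_
    rw [hZ n (hsucc n hn).1, hZ (n + 1) (hsucc n hn).2, hV (n + 1) (hsucc n hn).2]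
  · rw [hZ 1 h1]
  · rw [hV 1 h1]

theorem dgLin_congr {N : ℕ} {t : ℕ → ℝ} (hN : 1 ≤ N)
    (Kt : Matrix (Fin d ⊕ Fin d) (Fin d ⊕ Fin d) ℝ) (f : ℝ → Fin d → ℝ) (z0 : Fin d ⊕ Fin d → ℝ)
    {V V' : ℕ → ℝ → Fin d ⊕ Fin d → ℝ}
    (hV : ∀ n ∈ Finset.Icc 1 N, V n = V' n) :
    dgLin Kt N t f z0 V = dgLin Kt N t f z0 V' := by
  unfold dgLin
  congr 1
  · exact Finset.sum_congr rfl fun n hn ↦ by rw [hV n hn]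
  · rw [hV 1 (by simp [hN])]

theorem two_mul_dgBilin_evalSlab_self {Kt : Matrix (Fin d ⊕ Fin d) (Fin d ⊕ Fin d) ℝ}
    (hKt : Ktᵀ = Kt) {K : Matrix (Fin d) (Fin d) ℝ} (hK : Kᵀ = K) (L : Matrix (Fin d) (Fin d) ℝ)
    {N : ℕ} (hN : 1 ≤ N) (t : ℕ → ℝ) (Q : ℕ → Fin d ⊕ Fin d → ℝ[X])
    (hcont : ∀ n ∈ Finset.Icc 1 (N - 1), evalSlab Q (n + 1) (t n) = evalSlab Q n (t n)) :
    2 * dgBilin Kt (fromBlocks 0 (-K) K L) N t (evalSlab Q) (evalSlab Q)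
      = evalSlab Q N (t N) ⬝ᵥ Kt *ᵥ evalSlab Q N (t N)
        + evalSlab Q 1 (t 0) ⬝ᵥ Kt *ᵥ evalSlab Q 1 (t 0)
        + 2 * ∑ n ∈ Finset.Icc 1 N, lintervalIntegral (t (n - 1)) (t n)
            (Q n ∘ Sum.inr ⬝ᵥ L.map C *ᵥ (Q n ∘ Sum.inr)) := by
  set E : ℕ → ℝ → ℝ := fun n s ↦ evalSlab Q n s ⬝ᵥ Kt *ᵥ evalSlab Q n s
  have hslab : ∀ n, 2 * lintervalIntegral (t (n - 1)) (t n)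
        (dgIntegrand Kt (fromBlocks 0 (-K) K L) (Q n) (Q n))
      = (E n (t n) - E n (t (n - 1))) + 2 * lintervalIntegral (t (n - 1)) (t n)
          (Q n ∘ Sum.inr ⬝ᵥ L.map C *ᵥ (Q n ∘ Sum.inr)) := by
    intro n
    have map_two_mul : ∀ p, lintervalIntegral (t (n - 1)) (t n) (2 * p)
        = 2 * lintervalIntegral (t (n - 1)) (t n) p := fun p ↦ by rw [two_mul, map_add, two_mul]
    rw [← map_two_mul, two_mul_dgIntegrand_self hKt hK, map_add, map_two_mul,
      lintervalIntegral_derivative]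
    simp only [E, eval_dotProduct, eval_comp_mulVec_map_C, evalSlab_apply]
  have hjump : ∀ n ∈ Finset.Icc 1 (N - 1),
      Kt *ᵥ (evalSlab Q (n + 1) (t n) - evalSlab Q n (t n)) ⬝ᵥ evalSlab Q (n + 1) (t n) = 0 := by
    intro n hn
    rw [hcont n hn, sub_self, mulVec_zero, zero_dotProduct]
  have htele := Finset.sum_Icc_one_sub_telescope hN (fun n ↦ E n (t n))
    (fun n ↦ E n (t (n - 1))) fun n hn ↦ by simp only [E, Nat.add_sub_cancel, hcont n hn]
  rw [dgBilin_evalSlab, Finset.sum_eq_zero hjump, mul_add, mul_add, Finset.mul_sum,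
    Finset.sum_congr rfl fun n _ ↦ hslab n, Finset.sum_add_distrib, htele, ← Finset.mul_sum]
  simp only [E, dotProduct_comm (Kt *ᵥ _)]
  ring

end DGForms

noncomputable section DGPolySpace

def dgPolySpace (d N : ℕ) (t : ℕ → ℝ) (r : ℕ → ℕ) :
    Submodule ℝ (ℕ → Fin d ⊕ Fin d → ℝ[X]) where
  carrier := {Q | (∀ n ∉ Finset.Icc 1 N, Q n = 0) ∧ (∀ n i, (Q n i).natDegree ≤ r n) ∧
    (∀ n i, derivative (Q n (Sum.inl i)) = Q n (Sum.inr i)) ∧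
    ∀ n ∈ Finset.Icc 1 (N - 1), evalSlab Q (n + 1) (t n) = evalSlab Q n (t n)}
  add_mem' := by
    rintro Q R ⟨hQ₀, hQdeg, hQder, hQcont⟩ ⟨hR₀, hRdeg, hRder, hRcont⟩
    refine ⟨fun n hn ↦ by simp [hQ₀ n hn, hR₀ n hn],
      fun n i ↦ (natDegree_add_le _ _).trans (max_le (hQdeg n i) (hRdeg n i)),
      fun n i ↦ by simp [hQder, hRder], fun n hn ↦ ?_⟩
    simp only [map_add, Pi.add_apply, hQcont n hn, hRcont n hn]
  zero_mem' := by simp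
  smul_mem' := by
    rintro c Q ⟨hQ₀, hQdeg, hQder, hQcont⟩
    refine ⟨fun n hn ↦ by simp [hQ₀ n hn], fun n i ↦ (natDegree_smul_le _ _).trans (hQdeg n i),
      fun n i ↦ by simp [hQder], fun n hn ↦ ?_⟩
    simp only [map_smul, Pi.smul_apply, hQcont n hn]

variable {d N : ℕ} {t : ℕ → ℝ} {r : ℕ → ℕ}

instance : FiniteDimensional ℝ (dgPolySpace d N t r) := by
  set m := (Finset.Icc 1 N).sup r
  let coeffs : (ℕ → Fin d ⊕ Fin d → ℝ[X]) →ₗ[ℝ] Fin (N + 1) → Fin d ⊕ Fin d → Fin (m + 1) → ℝ :=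
    { toFun Q n i k := (Q n i).coeff k
      map_add' _ _ := rfl
      map_smul' _ _ := rfl }
  refine .of_injective (coeffs.domRestrict _) ((injective_iff_map_eq_zero _).2 ?_)
  rintro ⟨Q, hQ₀, hQdeg, _⟩ hQ
  ext n i k : 4
  by_cases hn : n ∈ Finset.Icc 1 N
  · have hnN : n < N + 1 := by simp at hn; omega
    by_cases hk : k < m + 1
    · exact congrFun (congrFun (congrFun hQ ⟨n, hnN⟩) i) ⟨k, hk⟩
    · exact coeff_eq_zero_of_natDegree_lt ((hQdeg n i).trans_lt
        ((Finset.le_sup hn).trans_lt (by omega)))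
  · simp [hQ₀ n hn]

theorem dgPolySpace.eq_zero_of_comp_inr_eq_zero {Q : ℕ → Fin d ⊕ Fin d → ℝ[X]}
    (hQ : Q ∈ dgPolySpace d N t r) (hw : ∀ n ∈ Finset.Icc 1 N, Q n ∘ Sum.inr = 0)
    (h0 : evalSlab Q 1 (t 0) = 0) : Q = 0 := by
  obtain ⟨hQ₀, -, hQder, hQcont⟩ := hQ
  have hslab : ∀ n ∈ Finset.Icc 1 N, evalSlab Q n (t (n - 1)) = 0 → Q n = 0 := by
    intro n hn hstart
    ext (i | i) : 1
    · refine eq_zero_of_derivative_eq_zero_of_eval_eq_zero ?_ (congrFun hstart (Sum.inl i))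
      rw [hQder, ← Function.comp_apply (f := Q n), hw n hn, Pi.zero_apply]
    · exact congrFun (hw n hn) i
  have hslabs : ∀ n, 1 ≤ n → n ≤ N → Q n = 0 := by
    intro n h1
    induction n, h1 using Nat.le_induction with
    | base => exact fun hN ↦ hslab 1 (by simp [hN]) h0
    | succ n h1 ih =>
      refine fun hn ↦ hslab (n + 1) (by simp; omega) ?_
      rw [Nat.add_sub_cancel, hQcont n (by simp; omega), evalSlab_apply, ih (by omega)]
      ext; simp
  ext n : 1
  by_cases hn : n ∈ Finset.Icc 1 N
  · simp only [Finset.mem_Icc] at hn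
    exact hslabs n hn.1 hn.2
  · exact hQ₀ n hn

theorem eq_zero_of_dgBilin_evalSlab_self_eq_zero {K P L : Matrix (Fin d) (Fin d) ℝ}
    (hK : K.PosDef) (hP : P.PosDef) (hL : L.PosDef) (hN : 1 ≤ N)
    (hmono : ∀ n < N, t n < t (n + 1)) {Q : ℕ → Fin d ⊕ Fin d → ℝ[X]}
    (hQ : Q ∈ dgPolySpace d N t r)
    (h : dgBilin (fromBlocks K 0 0 P) (fromBlocks 0 (-K) K L) N t (evalSlab Q) (evalSlab Q) = 0) :
    Q = 0 := by
  have hKt := hK.fromBlocks_zero hP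
  have henergy :=
    two_mul_dgBilin_evalSlab_self hKt.transpose_eq hK.transpose_eq L hN t Q hQ.2.2.2
  rw [h, mul_zero] at henergy
  have hwL : ∀ (w : Fin d → ℝ[X]) s,
      (w ⬝ᵥ L.map C *ᵥ w).eval s = eval s ∘ w ⬝ᵥ L *ᵥ eval s ∘ w :=
    fun w s ↦ by rw [eval_dotProduct, eval_comp_mulVec_map_C]
  have hwL_nonneg : ∀ (w : Fin d → ℝ[X]) s, 0 ≤ (w ⬝ᵥ L.map C *ᵥ w).eval s := fun w s ↦ by
    simpa [hwL] using hL.posSemidef.dotProduct_mulVec_nonneg (eval s ∘ w)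
  have hnonneg : ∀ n ∈ Finset.Icc 1 N, 0 ≤ lintervalIntegral (t (n - 1)) (t n)
      (Q n ∘ Sum.inr ⬝ᵥ L.map C *ᵥ (Q n ∘ Sum.inr)) := fun n hn ↦
    intervalIntegral.integral_nonneg (apply_sub_one_lt_of_mem_Icc hmono hn).le
      fun s _ ↦ hwL_nonneg _ s
  have hKt_nonneg : ∀ x, 0 ≤ x ⬝ᵥ fromBlocks K 0 0 P *ᵥ x := fun x ↦ by
    simpa using hKt.posSemidef.dotProduct_mulVec_nonneg x
  have hT_nonneg := hKt_nonneg (evalSlab Q N (t N))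
  have h0_nonneg := hKt_nonneg (evalSlab Q 1 (t 0))
  have hsum_nonneg := Finset.sum_nonneg hnonneg
  refine dgPolySpace.eq_zero_of_comp_inr_eq_zero hQ (fun n hn ↦ ?_)
    (hKt.dotProduct_mulVec_self_eq_zero_iff.1 (by linarith))
  have hzero := (Finset.sum_eq_zero_iff_of_nonneg hnonneg).1 (by linarith) n hn
  have hpoly := eq_zero_of_intervalIntegral_eq_zero (apply_sub_one_lt_of_mem_Icc hmono hn)
    (fun s _ ↦ hwL_nonneg _ s) hzero
  ext i : 1
  refine Polynomial.funext fun s ↦ ?_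
  have hws : eval s ∘ (Q n ∘ Sum.inr) = 0 :=
    hL.dotProduct_mulVec_self_eq_zero_iff.1 (by rw [← hwL, hpoly, eval_zero])
  simpa using congrFun hws i

end DGPolySpace

theorem isPolyDegV_iff {d r : ℕ} {v : ℝ → Fin d ⊕ Fin d → ℝ} :
    IsPolyDegV r v ↔ ∃ q : Fin d ⊕ Fin d → ℝ[X], (∀ i, (q i).natDegree ≤ r) ∧
      v = fun s ↦ eval s ∘ q := by
  refine ⟨fun h ↦ ?_, fun ⟨q, hq, hv⟩ i ↦ ⟨q i, hq i, fun s ↦ by rw [hv]; rfl⟩⟩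
  choose q hq using h
  exact ⟨q, fun i ↦ (hq i).1, funext fun s ↦ funext fun i ↦ (hq i).2 s⟩

section MemDG

variable {d N : ℕ} {t : ℕ → ℝ} {r : ℕ → ℕ}

theorem memDG_evalSlab {Q : ℕ → Fin d ⊕ Fin d → ℝ[X]} (hQ : Q ∈ dgPolySpace d N t r) :
    MemDG N t r (evalSlab Q) := by
  obtain ⟨-, hdeg, hder, hcont⟩ := hQ
  have hpoly : ∀ n, IsPolyDegV (r n) (evalSlab Q n) := fun n ↦
    isPolyDegV_iff.2 ⟨Q n, hdeg n, rfl⟩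
  have hstart : ∀ n ∈ Finset.Icc 2 N,
      evalSlab Q n (t (n - 1)) = evalSlab Q (n - 1) (t (n - 1)) := by
    intro n hn
    simp only [Finset.mem_Icc] at hn
    simpa [Nat.sub_add_cancel (by omega : 1 ≤ n)] using hcont (n - 1) (by simp; omega)
  refine ⟨fun n _ ↦ hpoly n, evalSlab Q, fun n _ ↦ hpoly n, hcont, fun n _ s ↦ ?_,
    fun n hn v _ ↦ ?_, hstart⟩
  · change deriv (fun τ ↦ eval τ ∘ (Q n ∘ Sum.inl)) s = _
    ext i
    simp [deriv_eval_comp, hder, evalSlab_apply]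
  · have hprev : (if n = 1 then evalSlab Q 1 (t 0) else evalSlab Q (n - 1) (t (n - 1)))
        = evalSlab Q n (t (n - 1)) := by
      split_ifs with h1
      · subst h1; rfl
      · exact (hstart n (by simp at hn ⊢; omega)).symm
    rw [hprev, sub_self, zero_dotProduct, add_zero]

theorem MemDG.exists_evalSlab (hmono : ∀ n < N, t n < t (n + 1))
    {Z : ℕ → ℝ → Fin d ⊕ Fin d → ℝ} (hZ : MemDG N t r Z) :
    ∃ Q ∈ dgPolySpace d N t r, ∀ n ∈ Finset.Icc 1 N, Z n = evalSlab Q n := by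
  obtain ⟨hZpoly, Zh, hZhpoly, hZhcont, hZhder, hrecon, hZhstart⟩ := hZ
  have hslab : ∀ n ∈ Finset.Icc 1 N, ∃ q : Fin d ⊕ Fin d → ℝ[X], (∀ i, (q i).natDegree ≤ r n) ∧
      Z n = (fun s ↦ eval s ∘ q) ∧ Zh n = fun s ↦ eval s ∘ q := by
    intro n hn
    obtain ⟨qz, hqz, hZn⟩ := isPolyDegV_iff.1 (hZpoly n hn)
    obtain ⟨qh, hqh, hZhn⟩ := isPolyDegV_iff.1 (hZhpoly n hn)
    have hprev : (if n = 1 then Zh 1 (t 0) else Z (n - 1) (t (n - 1))) = Zh n (t (n - 1)) := by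
      split_ifs with h1
      · subst h1; rfl
      · exact (hZhstart n (by simp at hn ⊢; omega)).symm
    have hqhz : qh = qz := eq_of_reconstruction_identity (apply_sub_one_lt_of_mem_Icc hmono hn)
      hqh hqz fun v hv ↦ by
        have := hrecon n hn _ (isPolyDegV_iff.2 ⟨v, hv, rfl⟩)
        rw [hprev, hZn, hZhn] at this
        simpa only [lintervalIntegral_comp_derivative_dotProduct] using this
    exact ⟨qz, hqz, hZn, hqhz ▸ hZhn⟩
  choose! q hq using hslab
  refine ⟨fun n ↦ if n ∈ Finset.Icc 1 N then q n else 0,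
    ⟨fun n hn ↦ if_neg hn, fun n i ↦ ?_, fun n i ↦ ?_, fun n hn ↦ ?_⟩, fun n hn ↦ ?_⟩
  · dsimp only
    split_ifs with hn
    exacts [(hq n hn).1 i, by simp]
  · dsimp only
    split_ifs with hn
    · refine Polynomial.funext fun s ↦ ?_
      have hder := hZhder n hn s
      rw [(hq n hn).2.2] at hder
      change deriv (fun τ ↦ eval τ ∘ (q n ∘ Sum.inl)) s = _ at hder
      rw [deriv_eval_comp] at hder
      exact congrFun hder i
    · simp
  · have h1 : n ∈ Finset.Icc 1 N := by simp at hn ⊢; omega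
    have h2 : n + 1 ∈ Finset.Icc 1 N := by simp at hn ⊢; omega
    have hcont := hZhcont n hn
    rw [(hq n h1).2.2, (hq (n + 1) h2).2.2] at hcont
    simpa only [evalSlab_apply, if_pos h1, if_pos h2] using hcont
  · rw [(hq n hn).2.1]
    ext s : 1
    rw [evalSlab_apply, if_pos hn]

end MemDG

theorem stmt_5_general {d N : ℕ} (hN : 1 ≤ N)
    (P L K : Matrix (Fin d) (Fin d) ℝ) (hP : P.PosDef) (hL : L.PosDef) (hK : K.PosDef)
    (T : ℝ) (t : ℕ → ℝ) (ht0 : t 0 = 0) (htN : t N = T)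
    (hmono : ∀ n < N, t n < t (n+1)) (r : ℕ → ℕ)
    (f : ℝ → Fin d → ℝ) (hf : MemLp f 2 (volume.restrict (Set.Ioc 0 T)))
    (u0 u1 : Fin d → ℝ) :
    ∃ Z : ℕ → ℝ → (Fin d ⊕ Fin d) → ℝ, MemDG N t r Z ∧
      (∀ V, MemDG N t r V →
        dgBilin (Matrix.fromBlocks K 0 0 P) (Matrix.fromBlocks 0 (-K) K L) N t Z V
          = dgLin (Matrix.fromBlocks K 0 0 P) N t f (Sum.elim u0 u1) V) ∧
      ∀ Z' : ℕ → ℝ → (Fin d ⊕ Fin d) → ℝ, MemDG N t r Z' →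
        (∀ V, MemDG N t r V →
          dgBilin (Matrix.fromBlocks K 0 0 P) (Matrix.fromBlocks 0 (-K) K L) N t Z' V
            = dgLin (Matrix.fromBlocks K 0 0 P) N t f (Sum.elim u0 u1) V) →
        ∀ n ∈ Finset.Icc 1 N, ∀ s ∈ Set.Ioc (t (n-1)) (t n), Z' n s = Z n s := by
  set S := dgPolySpace d N t r
  set B := (dgBilinForm (fromBlocks K 0 0 P) (fromBlocks 0 (-K) K L) N t).domRestrict₁₂ S S
  have hf_slab : ∀ n ∈ Finset.Icc 1 N, IntervalIntegrable f volume (t (n - 1)) (t n) :=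
    fun n hn ↦ intervalIntegrable_of_integrableOn_Ioc (hf.integrable one_le_two) ht0 htN hmono hn
  set F := (dgLinForm (fromBlocks K 0 0 P) N t f (Sum.elim u0 u1) hf_slab).domRestrict S
  obtain ⟨Q, hQF, hQuniq⟩ := LinearMap.BilinForm.existsUnique_eq_of_anisotropic B
    (fun Q hQ ↦ Subtype.ext (eq_zero_of_dgBilin_evalSlab_self_eq_zero hK hP hL hN hmono Q.2 hQ)) F
  refine ⟨evalSlab Q, memDG_evalSlab Q.2, fun V hV ↦ ?_, fun Z' hZ' hsol n hn s _ ↦ ?_⟩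
  · obtain ⟨R, hR, hVR⟩ := hV.exists_evalSlab hmono
    rw [dgBilin_congr hN _ _ (fun _ _ ↦ rfl) hVR, dgLin_congr hN _ _ _ hVR]
    exact LinearMap.congr_fun hQF ⟨R, hR⟩
  · obtain ⟨Q', hQ', hZQ'⟩ := hZ'.exists_evalSlab hmono
    have hQQ' : (⟨Q', hQ'⟩ : S) = Q := hQuniq _ <| LinearMap.ext fun R ↦ by
      refine Eq.trans ?_ (hsol _ (memDG_evalSlab R.2))
      exact dgBilin_congr hN _ _ (fun n hn ↦ (hZQ' n hn).symm) fun _ _ ↦ rfl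
    rw [hZQ' n hn, ← hQQ']

/-- well-posedness of the DG formulation.
With `P, L, K` symmetric positive definite, `K̃ = [[K,0],[0,P]]`, `A = [[0,−K],[K,L]]`,
a partition `0 = t₀ < ⋯ < t_N = T`, `f ∈ L²((0,T]; ℝ^d)` and `û₀, û₁ ∈ ℝ^d`, the
discrete problem "find `z_DG ∈ V_DG^r` with `A(z_DG, v) = F(v)` for all `v ∈ V_DG^r`"
admits a unique solution (unique as a function on `(0,T] = ⋃ₙ Iₙ`). -/
theorem stmt_5 {d N : ℕ} (hd : 1 ≤ d) (hN : 1 ≤ N)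
    (P L K : Matrix (Fin d) (Fin d) ℝ) (hP : P.PosDef) (hL : L.PosDef) (hK : K.PosDef)
    (T : ℝ) (hT : 0 < T) (t : ℕ → ℝ) (ht0 : t 0 = 0) (htN : t N = T)
    (hmono : ∀ n < N, t n < t (n+1)) (r : ℕ → ℕ)
    (f : ℝ → Fin d → ℝ) (hf : MemLp f 2 (volume.restrict (Set.Ioc 0 T)))
    (u0 u1 : Fin d → ℝ) :
    ∃ Z : ℕ → ℝ → (Fin d ⊕ Fin d) → ℝ, MemDG N t r Z ∧
      (∀ V, MemDG N t r V →
        dgBilin (Matrix.fromBlocks K 0 0 P) (Matrix.fromBlocks 0 (-K) K L) N t Z V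
          = dgLin (Matrix.fromBlocks K 0 0 P) N t f (Sum.elim u0 u1) V) ∧
      ∀ Z' : ℕ → ℝ → (Fin d ⊕ Fin d) → ℝ, MemDG N t r Z' →
        (∀ V, MemDG N t r V →
          dgBilin (Matrix.fromBlocks K 0 0 P) (Matrix.fromBlocks 0 (-K) K L) N t Z' V
            = dgLin (Matrix.fromBlocks K 0 0 P) N t f (Sum.elim u0 u1) V) →
        ∀ n ∈ Finset.Icc 1 N, ∀ s ∈ Set.Ioc (t (n-1)) (t n), Z' n s = Z n s :=
  stmt_5_general hN P L K hP hL hK T t ht0 htN hmono r f hf u0 u1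
end

section
/- Let r ∈ ℕ and let u ∈ L²(−1,1) be continuous at t = 1 (so that u(1) is well defined). Then there exists a unique polynomial p of degree ≤ r such that p(1) = u(1) and ∫_{−1}^{1} (u(t) − p(t)) q(t) dt = 0 for every polynomial q of degree ≤ r − 1. (This polynomial is denoted Π^r u.) -/
/-!
The conditions are `r + 1` linear equations on the `(r + 1)`-dimensional space of polynomials
of degree `≤ r`, so it suffices that the homogeneous problem has only the zero solution. If
`p (b) = 0` then `p = (X - b) s` with `deg s < r`, and testing orthogonality against `s` itself
gives `∫ t in a..b, (b - t) s(t)² = 0`; the integrand is continuous, nonnegative on `[a, b]` and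
positive wherever `s` does not vanish, so `s = 0`.
-/

open MeasureTheory Set intervalIntegral

open scoped Polynomial

namespace Polynomial

variable {a b : ℝ}

lemma intervalIntegrable_eval_mul_eval (p q : ℝ[X]) (a b : ℝ) :
    IntervalIntegrable (fun t => p.eval t * q.eval t) volume a b :=
  (p.continuous.mul q.continuous).intervalIntegrable a b

instance (K : Type*) [Field K] (n : ℕ) : FiniteDimensional K (degreeLT K n) :=
  .equiv (degreeLTEquiv K n).symm

lemma finrank_degreeLT (K : Type*) [Field K] (n : ℕ) : Module.finrank K (degreeLT K n) = n := by
  rw [(degreeLTEquiv K n).finrank_eq, Module.finrank_fin_fun]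

lemma mem_degreeLT_succ_iff_natDegree_le {R : Type*} [Semiring R] {p : R[X]} {n : ℕ} :
    p ∈ degreeLT R (n + 1) ↔ p.natDegree ≤ n := by
  rw [degreeLT_succ_eq_degreeLE, mem_degreeLE, natDegree_le_iff_degree_le]

noncomputable def intervalL2Form (a b : ℝ) : ℝ[X] →ₗ[ℝ] ℝ[X] →ₗ[ℝ] ℝ :=
  LinearMap.mk₂ ℝ (fun p q => ∫ t in a..b, p.eval t * q.eval t)
    (fun _ _ _ => by
      simp only [eval_add, add_mul]
      exact integral_add (intervalIntegrable_eval_mul_eval ..)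
        (intervalIntegrable_eval_mul_eval ..))
    (fun _ _ _ => by simp [mul_assoc])
    (fun _ _ _ => by
      simp only [eval_add, mul_add]
      exact integral_add (intervalIntegrable_eval_mul_eval ..)
        (intervalIntegrable_eval_mul_eval ..))
    (fun _ _ _ => by simp [mul_left_comm])

@[simp]
lemma intervalL2Form_apply (p q : ℝ[X]) :
    intervalL2Form a b p q = ∫ t in a..b, p.eval t * q.eval t := rfl

noncomputable def integralAgainst {f : ℝ → ℝ} (hf : IntervalIntegrable f volume a b) :
    ℝ[X] →ₗ[ℝ] ℝ where
  toFun q := ∫ t in a..b, f t * q.eval t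
  map_add' p q := by
    simp only [eval_add, mul_add]
    exact integral_add (hf.mul_continuousOn p.continuous.continuousOn)
      (hf.mul_continuousOn q.continuous.continuousOn)
  map_smul' c q := by simp [mul_left_comm]

@[simp]
lemma integralAgainst_apply {f : ℝ → ℝ} (hf : IntervalIntegrable f volume a b) (q : ℝ[X]) :
    integralAgainst hf q = ∫ t in a..b, f t * q.eval t := rfl

theorem eq_zero_of_eval_eq_zero_of_integral_mul_eq_zero (hab : a < b) {r : ℕ} {p : ℝ[X]}
    (hp : p.natDegree ≤ r) (hb : p.eval b = 0)
    (horth : ∀ q : ℝ[X], q.degree < r → ∫ t in a..b, p.eval t * q.eval t = 0) : p = 0 := by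
  set s := p /ₘ (X - C b)
  have hps : (X - C b) * s = p := mul_divByMonic_eq_iff_isRoot.mpr hb
  by_contra hp0
  have hs0 : s ≠ 0 := by rintro hs; simp [hs, eq_comm, hp0] at hps
  have hsr : s.degree < r := by
    have : p.natDegree = s.natDegree + 1 := by
      rw [← hps, natDegree_mul (X_sub_C_ne_zero b) hs0, natDegree_X_sub_C, add_comm]
    exact (natDegree_lt_iff_degree_lt hs0).mp (by omega)
  obtain ⟨c, hc, hsc⟩ : ∃ c ∈ Ioo a b, s.eval c ≠ 0 := by
    by_contra! h
    exact hs0 (s.eq_zero_of_infinite_isRoot ((Ioo_infinite hab).mono h))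
  have hpos : 0 < ∫ t in a..b, (b - t) * s.eval t ^ 2 :=
    integral_pos hab (by fun_prop) (fun t ht => mul_nonneg (by linarith [ht.2]) (sq_nonneg _))
      ⟨c, Ioo_subset_Icc_self hc, mul_pos (by linarith [hc.2]) (by positivity)⟩
  have hneg : ∫ t in a..b, (b - t) * s.eval t ^ 2 = -∫ t in a..b, p.eval t * s.eval t := by
    rw [← intervalIntegral.integral_neg, ← hps]
    congr 1 with t
    simp only [eval_mul, eval_sub, eval_X, eval_C]
    ring
  rw [hneg, horth s hsr, neg_zero] at hpos
  exact hpos.false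

lemma integral_sub_mul_eq_zero_iff {f : ℝ → ℝ} (hf : IntervalIntegrable f volume a b)
    (p q : ℝ[X]) :
    ∫ t in a..b, (f t - p.eval t) * q.eval t = 0 ↔
      integralAgainst hf q = intervalL2Form a b p q := by
  simp only [sub_mul]
  rw [integral_sub (hf.mul_continuousOn q.continuous.continuousOn)
    (intervalIntegrable_eval_mul_eval ..), sub_eq_zero, integralAgainst_apply,
    intervalL2Form_apply]

theorem existsUnique_eval_eq_and_integral_sub_mul_eq_zero (hab : a < b) (r : ℕ) {f : ℝ → ℝ}
    (hf : IntervalIntegrable f volume a b) (c : ℝ) :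
    ∃! p : ℝ[X], p.natDegree ≤ r ∧ p.eval b = c ∧
      ∀ q : ℝ[X], q.degree < r → ∫ t in a..b, (f t - p.eval t) * q.eval t = 0 := by
  set V := degreeLT ℝ (r + 1)
  set W := degreeLT ℝ r
  let T : V →ₗ[ℝ] ℝ × Module.Dual ℝ W :=
    ((leval b).prod ((intervalL2Form a b).compl₂ W.subtype)).comp V.subtype
  set y : ℝ × Module.Dual ℝ W := (c, (integralAgainst hf).comp W.subtype)
  have hT : ∀ (p : ℝ[X]) (hp : p ∈ V), T ⟨p, hp⟩ = y ↔ p.eval b = c ∧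
      ∀ q : ℝ[X], q.degree < r → ∫ t in a..b, (f t - p.eval t) * q.eval t = 0 := by
    intro p hp
    simp only [Prod.ext_iff, LinearMap.ext_iff, Subtype.forall, W, mem_degreeLT,
      integral_sub_mul_eq_zero_iff hf, eq_comm (a := integralAgainst hf _)]
    rfl
  have hinj : Function.Injective T := by
    rw [← LinearMap.ker_eq_bot, LinearMap.ker_eq_bot']
    rintro ⟨p, hp⟩ hTp
    obtain ⟨hb, horth⟩ := Prod.ext_iff.mp hTp
    exact Subtype.ext <| eq_zero_of_eval_eq_zero_of_integral_mul_eq_zero hab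
      (mem_degreeLT_succ_iff_natDegree_le.mp hp) hb
      fun q hq => LinearMap.congr_fun horth ⟨q, mem_degreeLT.mpr hq⟩
  have hsurj : Function.Surjective T := by
    refine (LinearMap.injective_iff_surjective_of_finrank_eq_finrank ?_).mp hinj
    rw [Module.finrank_prod, Subspace.dual_finrank_eq, finrank_degreeLT, finrank_degreeLT,
      Module.finrank_self, add_comm]
  obtain ⟨⟨p, hpV⟩, hp⟩ := hsurj y
  refine ⟨p, ⟨mem_degreeLT_succ_iff_natDegree_le.mp hpV, (hT p hpV).mp hp⟩, ?_⟩
  rintro p' ⟨hp'r, hp'⟩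
  have hp'V : p' ∈ V := mem_degreeLT_succ_iff_natDegree_le.mpr hp'r
  exact congrArg Subtype.val (hinj (((hT p' hp'V).mpr hp').trans hp.symm))

end Polynomial

theorem stmt_8_general (r : ℕ) (u : ℝ → ℝ)
    (hu : MemLp u 2 (volume.restrict (Set.Ioo (-1 : ℝ) 1))) :
    ∃! p : Polynomial ℝ, p.natDegree ≤ r ∧ p.eval 1 = u 1 ∧
      ∀ q : Polynomial ℝ, q.degree < (r : WithBot ℕ) →
        ∫ t in (-1 : ℝ)..1, (u t - p.eval t) * q.eval t = 0 :=
  Polynomial.existsUnique_eval_eq_and_integral_sub_mul_eq_zero (by norm_num) r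
    ((intervalIntegrable_iff_integrableOn_Ioo_of_le (by norm_num)).mpr
      (hu.integrable one_le_two)) (u 1)

/-- well-posedness of the projector `Π^r`.
Let `r ∈ ℕ` and let `u ∈ L²(−1,1)` be continuous at `t = 1` (from within `[−1,1]`).
Then there exists a unique polynomial `p` of degree `≤ r` such that `p 1 = u 1` and
`∫_{−1}^{1} (u − p) q dt = 0` for every polynomial `q` of degree `≤ r − 1`
(equivalently, of degree `< r`). -/
theorem stmt_8 (r : ℕ) (u : ℝ → ℝ)
    (hu : MemLp u 2 (volume.restrict (Set.Ioo (-1 : ℝ) 1)))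
    (hc : ContinuousWithinAt u (Set.Icc (-1 : ℝ) 1) 1) :
    ∃! p : Polynomial ℝ, p.natDegree ≤ r ∧ p.eval 1 = u 1 ∧
      ∀ q : Polynomial ℝ, q.degree < (r : WithBot ℕ) →
        ∫ t in (-1 : ℝ)..1, (u t - p.eval t) * q.eval t = 0 :=
  stmt_8_general r u hu
end

section
/- There exists a constant C > 0 such that for every r ∈ ℕ and every continuously differentiable function u : [−1,1] → ℝ, the derivative of the projection satisfies ‖u′ − (Π^r u)′‖²_{L²(−1,1)} ≤ C (r+1) · inf { ‖u′ − q′‖²_{L²(−1,1)} : q a polynomial of degree ≤ r }. -/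
/-!
Put `e = u - Π^r u`, `G = u' - q'` and `w = (Π^r u - q)'`, a polynomial of degree `< r`, so
that `e' = G - w`. Integration by parts, `e(1) = 0` and the orthogonality of `e` to polynomials
of degree `< r` give `∫ e' P = -e(-1) P(-1)` whenever `deg P ≤ r`. Tested against the Legendre
polynomials `L_j` (`j ≤ r`) this reads `⟨w, L_j⟩ = ⟨G, L_j⟩ + e(-1) (-1)^j`. For `j = r` the
left side vanishes, so `e(-1)² = ⟨G, L_r⟩²`. Parseval's identity for `w` and Bessel's inequality
for `G`, with `‖L_j‖² = 2 / (2j + 1)`, then give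
`‖w‖² ≤ 2 ∑_{j<r} (2j+1)/2 ⟨G, L_j⟩² + r² ⟨G, L_r⟩² ≤ (r + 2) ‖G‖²`,
and finally `‖e'‖² ≤ 2 ‖G‖² + 2 ‖w‖² ≤ 6 (r + 1) ‖G‖²`.
-/

open MeasureTheory Set intervalIntegral Polynomial

lemma neg_one_pow_sq {R : Type*} [Monoid R] [HasDistribNeg R] (n : ℕ) :
    ((-1 : R) ^ n) ^ 2 = 1 := by
  rw [← pow_mul, mul_comm, pow_mul, neg_one_sq, one_pow]

namespace Polynomial

noncomputable def legendre : ℕ → ℝ[X]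
  | 0 => 1
  | 1 => X
  | n + 2 =>
    C ((2 * n + 3) / (n + 2) : ℝ) * X * legendre (n + 1)
      - C ((n + 1) / (n + 2) : ℝ) * legendre n

@[simp] lemma legendre_zero : legendre 0 = 1 := rfl

@[simp] lemma legendre_one : legendre 1 = X := rfl

lemma legendre_add_two (n : ℕ) :
    ((n : ℝ[X]) + 2) * legendre (n + 2)
      = (2 * (n : ℝ[X]) + 3) * X * legendre (n + 1) - ((n : ℝ[X]) + 1) * legendre n := by
  have hn : (n : ℝ) + 2 ≠ 0 := by positivity
  rw [legendre, show ((n : ℝ[X]) + 2) = C ((n : ℝ) + 2) by simp [C_ofNat], mul_sub,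
    ← mul_assoc, ← mul_assoc, ← mul_assoc, ← C_mul, ← C_mul, mul_div_cancel₀ _ hn,
    mul_div_cancel₀ _ hn]
  simp [C_ofNat]

lemma natDegree_legendre_le (n : ℕ) : (legendre n).natDegree ≤ n := by
  induction n using Nat.twoStepInduction with
  | zero => simp
  | one => simp
  | more n ih₀ ih₁ =>
    rw [legendre]
    refine (natDegree_sub_le _ _).trans (max_le ?_ ?_)
    · refine natDegree_mul_le.trans ?_
      grw [natDegree_C_mul_le, natDegree_X, ih₁]
      omega
    · grw [natDegree_C_mul_le, ih₀]
      omega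

lemma coeff_legendre_self_pos (n : ℕ) : 0 < (legendre n).coeff n := by
  induction n using Nat.twoStepInduction with
  | zero => simp
  | one => simp
  | more n ih₀ ih₁ =>
    have hlow : (legendre n).coeff (n + 2) = 0 :=
      coeff_eq_zero_of_natDegree_lt ((natDegree_legendre_le n).trans_lt (by omega))
    rw [legendre, coeff_sub, mul_assoc, coeff_C_mul, coeff_C_mul, coeff_X_mul, hlow, mul_zero,
      sub_zero]
    positivity

lemma degree_legendre (n : ℕ) : (legendre n).degree = n :=
  degree_eq_of_le_of_coeff_ne_zero (natDegree_le_iff_degree_le.mp (natDegree_legendre_le n))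
    (coeff_legendre_self_pos n).ne'

lemma legendre_eval_of_sq_eq_one {x : ℝ} (hx : x ^ 2 = 1) (n : ℕ) :
    (legendre n).eval x = x ^ n := by
  induction n using Nat.twoStepInduction with
  | zero => simp
  | one => simp
  | more n ih₀ ih₁ =>
    have h := congrArg (eval x) (legendre_add_two n)
    simp only [eval_mul, eval_sub, eval_add, eval_natCast, eval_ofNat, eval_X, eval_one, ih₀,
      ih₁] at h
    have hn : (n : ℝ) + 2 ≠ 0 := by positivity
    exact mul_left_cancel₀ hn (by linear_combination h + ((n : ℝ) + 1) * x ^ n * hx)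

lemma legendre_derivative_identities (n : ℕ) :
    X * derivative (legendre (n + 1))
        = derivative (legendre n) + ((n : ℝ[X]) + 1) * legendre (n + 1) ∧
      (X ^ 2 - 1) * derivative (legendre (n + 1))
        = ((n : ℝ[X]) + 1) * (X * legendre (n + 1) - legendre n) := by
  induction n with
  | zero =>
    simp only [zero_add, legendre_zero, legendre_one, derivative_X, derivative_one, Nat.cast_zero]
    constructor <;> ring
  | succ n ih =>
    obtain ⟨h₁, h₂⟩ := ih
    have hrec := legendre_add_two n
    have hrec' := congrArg derivative hrec
    simp only [derivative_mul, derivative_add, derivative_sub, derivative_natCast,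
      derivative_ofNat, derivative_X, derivative_one] at hrec'
    have hn : (n : ℝ[X]) + 2 ≠ 0 := by
      rw [show ((n : ℝ[X]) + 2) = C ((n : ℝ) + 2) by simp [C_ofNat]]
      exact C_ne_zero.mpr (by positivity)
    have hd : derivative (legendre (n + 2))
        = X * derivative (legendre (n + 1)) + ((n : ℝ[X]) + 2) * legendre (n + 1) :=
      mul_left_cancel₀ hn (by linear_combination hrec' + ((n : ℝ[X]) + 1) * h₁)
    push_cast
    constructor
    · linear_combination X * hd + h₂ - hrec
    · linear_combination (X ^ 2 - 1) * hd + X * h₂ - X * hrec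

lemma derivative_X_sq_sub_one_mul_derivative_legendre (n : ℕ) :
    derivative ((X ^ 2 - 1) * derivative (legendre n)) = ((n : ℝ) * (n + 1)) • legendre n := by
  cases n with
  | zero => simp
  | succ n =>
    obtain ⟨h₁, h₂⟩ := legendre_derivative_identities n
    rw [h₂, smul_eq_C_mul]
    simp only [derivative_mul, derivative_sub, derivative_X, derivative_natCast, derivative_one,
      map_mul, map_natCast, map_add, map_one]
    push_cast
    linear_combination ((n : ℝ[X]) + 1) * h₁

noncomputable def legendreSequence : Sequence ℝ where
  elems' := legendre
  degree_eq' := degree_legendre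

lemma exists_eq_sum_legendre {P : ℝ[X]} {m : ℕ} (hP : P.degree < m) :
    ∃ c : ℕ → ℝ, P = ∑ j ∈ Finset.range m, c j • legendre j := by
  have hmem : P ∈ degreeLT ℝ m := mem_degreeLT.mpr hP
  rw [← legendreSequence.span_degreeLT fun i _ ↦
      isUnit_iff_ne_zero.mpr (leadingCoeff_ne_zero.mpr (legendreSequence.ne_zero i)),
    show Set.Iio m = Finset.range m by simp,
    Submodule.mem_span_image_finset_iff_exists_fun'] at hmem
  obtain ⟨c, hc⟩ := hmem
  exact ⟨c, hc.symm⟩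

lemma degree_sum_smul_legendre_lt (m : ℕ) (c : ℕ → ℝ) :
    (∑ j ∈ Finset.range m, c j • legendre j).degree < m :=
  mem_degreeLT.mp <| Submodule.sum_mem _ fun j hj ↦ Submodule.smul_mem _ _ <|
    mem_degreeLT.mpr <| by simpa [degree_legendre] using Finset.mem_range.mp hj

lemma coeff_X_mul_derivative {R : Type*} [CommSemiring R] (P : R[X]) (k : ℕ) :
    (X * derivative P).coeff k = k * P.coeff k := by
  cases k with
  | zero => simp
  | succ k => rw [coeff_X_mul, coeff_derivative]; push_cast; ring

lemma degree_X_mul_derivative_sub_lt {R : Type*} [CommRing R] {P : R[X]} {n : ℕ}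
    (hP : P.natDegree ≤ n) : (X * derivative P - (n : R[X]) * P).degree < (n : WithBot ℕ) := by
  rw [degree_lt_iff_coeff_zero]
  intro k hk
  rw [coeff_sub, coeff_X_mul_derivative, ← C_eq_natCast, coeff_C_mul]
  rcases hk.eq_or_lt with rfl | hlt
  · ring
  · simp [coeff_eq_zero_of_natDegree_lt (hP.trans_lt hlt)]

lemma degree_derivative_lt_of_natDegree_le {R : Type*} [Semiring R] {P : R[X]} {n : ℕ}
    (hP : P.natDegree ≤ n) : P.derivative.degree < n := by
  rcases eq_or_ne P 0 with rfl | hP0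
  · simp
  · exact (degree_derivative_lt hP0).trans_le (degree_le_of_natDegree_le hP)

noncomputable def intervalIntegralₗ (a b : ℝ) : ℝ[X] →ₗ[ℝ] ℝ where
  toFun P := ∫ t in a..b, P.eval t
  map_add' P Q := by
    simp only [eval_add]
    exact integral_add (P.continuous.intervalIntegrable a b) (Q.continuous.intervalIntegrable a b)
  map_smul' c P := by simp

lemma intervalIntegralₗ_apply (a b : ℝ) (P : ℝ[X]) :
    intervalIntegralₗ a b P = ∫ t in a..b, P.eval t := rfl

lemma intervalIntegralₗ_mul (a b : ℝ) (P Q : ℝ[X]) :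
    intervalIntegralₗ a b (P * Q) = ∫ t in a..b, P.eval t * Q.eval t := by
  simp only [intervalIntegralₗ_apply, eval_mul]

lemma intervalIntegralₗ_derivative (a b : ℝ) (P : ℝ[X]) :
    intervalIntegralₗ a b (derivative P) = P.eval b - P.eval a :=
  integral_eq_sub_of_hasDerivAt (fun t _ ↦ P.hasDerivAt t)
    (P.derivative.continuous.intervalIntegrable a b)

local notation "𝕁" => intervalIntegralₗ (-1) 1

/-- Integrating the Legendre equation by parts; the boundary terms vanish at `±1`. -/
lemma intervalIntegralₗ_legendre_mul_legendre_eq (m n : ℕ) :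
    ((m : ℝ) * (m + 1)) * 𝕁 (legendre m * legendre n)
      = -𝕁 ((X ^ 2 - 1) * derivative (legendre m) * derivative (legendre n)) := by
  have h := intervalIntegralₗ_derivative (-1) 1
    ((X ^ 2 - 1) * derivative (legendre m) * legendre n)
  rw [derivative_mul, derivative_X_sq_sub_one_mul_derivative_legendre, map_add, smul_mul_assoc,
    map_smul, smul_eq_mul] at h
  simp only [eval_mul, eval_sub, eval_pow, eval_X, eval_one, one_pow, neg_one_sq, sub_self,
    zero_mul] at h
  linarith

lemma intervalIntegralₗ_legendre_mul_legendre_of_ne {m n : ℕ} (h : m ≠ n) :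
    𝕁 (legendre m * legendre n) = 0 := by
  have hsymm := intervalIntegralₗ_legendre_mul_legendre_eq n m
  rw [mul_comm (legendre n), mul_right_comm _ (derivative (legendre n))] at hsymm
  have hne : (m : ℝ) * (m + 1) - n * (n + 1) ≠ 0 := by
    refine sub_ne_zero.mpr fun h' ↦ h ?_
    have : (m : ℝ) = n := by nlinarith [m.cast_nonneg (α := ℝ), n.cast_nonneg (α := ℝ)]
    exact_mod_cast this
  refine (mul_eq_zero.mp ?_).resolve_left hne
  linear_combination intervalIntegralₗ_legendre_mul_legendre_eq m n - hsymm

lemma intervalIntegralₗ_legendre_mul_of_degree_lt {n : ℕ} {P : ℝ[X]} (hP : P.degree < n) :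
    𝕁 (legendre n * P) = 0 := by
  obtain ⟨c, rfl⟩ := exists_eq_sum_legendre hP
  simp only [Finset.mul_sum, mul_smul_comm, map_sum, map_smul, smul_eq_mul]
  refine Finset.sum_eq_zero fun j hj ↦ ?_
  rw [intervalIntegralₗ_legendre_mul_legendre_of_ne (Finset.mem_range.mp hj).ne', mul_zero]

lemma intervalIntegralₗ_legendre_mul_self (n : ℕ) :
    𝕁 (legendre n * legendre n) = 2 / (2 * n + 1) := by
  -- `∫ x Lₙ Lₙ'` is `n ∫ Lₙ²` by orthogonality, and `1 - ∫ Lₙ² / 2` by parts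
  have hortho :
      𝕁 (legendre n * (X * derivative (legendre n))) = n * 𝕁 (legendre n * legendre n) := by
    have h := intervalIntegralₗ_legendre_mul_of_degree_lt
      (degree_X_mul_derivative_sub_lt (natDegree_legendre_le n))
    rw [mul_sub, map_sub, ← C_eq_natCast, ← smul_eq_C_mul, mul_smul_comm, map_smul,
      smul_eq_mul] at h
    linarith
  have hparts := intervalIntegralₗ_derivative (-1) 1 (X * legendre n ^ 2)
  have hd : derivative (X * legendre n ^ 2)
      = legendre n * legendre n + (2 : ℝ) • (legendre n * (X * derivative (legendre n))) := by
    rw [derivative_mul, derivative_X, derivative_sq, two_smul, C_ofNat]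
    ring
  rw [hd, map_add, map_smul, smul_eq_mul, hortho] at hparts
  simp only [eval_mul, eval_pow, eval_X, legendre_eval_of_sq_eq_one (one_pow 2),
    legendre_eval_of_sq_eq_one neg_one_sq, one_pow, neg_one_pow_sq] at hparts
  field_simp
  linarith

lemma intervalIntegralₗ_sum_smul_legendre_mul_legendre {m k : ℕ} (hk : k < m)
    (c : ℕ → ℝ) :
    𝕁 ((∑ j ∈ Finset.range m, c j • legendre j) * legendre k)
      = c k * (2 / (2 * k + 1)) := by
  simp only [Finset.sum_mul, map_sum, smul_mul_assoc, map_smul, smul_eq_mul]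
  rw [Finset.sum_eq_single_of_mem k (Finset.mem_range.mpr hk),
    intervalIntegralₗ_legendre_mul_self]
  intro j _ hj
  rw [intervalIntegralₗ_legendre_mul_legendre_of_ne hj, mul_zero]

lemma intervalIntegralₗ_mul_self_eq_sum {P : ℝ[X]} {m : ℕ} (hP : P.degree < m) :
    𝕁 (P * P) = ∑ j ∈ Finset.range m, (2 * j + 1) / 2 * 𝕁 (P * legendre j) ^ 2 := by
  obtain ⟨c, rfl⟩ := exists_eq_sum_legendre hP
  conv_lhs => rw [Finset.mul_sum]
  simp only [mul_smul_comm, map_sum, map_smul, smul_eq_mul]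
  refine Finset.sum_congr rfl fun j hj ↦ ?_
  rw [intervalIntegralₗ_sum_smul_legendre_mul_legendre (Finset.mem_range.mp hj)]
  field_simp

lemma sum_sq_integral_mul_legendre_le {G : ℝ → ℝ} (hG : ContinuousOn G (Icc (-1) 1))
    (m : ℕ) :
    ∑ j ∈ Finset.range m, (2 * j + 1) / 2 * (∫ t in (-1)..1, G t * (legendre j).eval t) ^ 2
      ≤ ∫ t in (-1)..1, G t ^ 2 := by
  set β : ℕ → ℝ := fun j ↦ ∫ t in (-1)..1, G t * (legendre j).eval t
  set B := ∑ j ∈ Finset.range m, (2 * j + 1) / 2 * β j ^ 2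
  -- `S` is the orthogonal projection of `G` onto the polynomials of degree `< m`
  set S := ∑ j ∈ Finset.range m, ((2 * j + 1) / 2 * β j) • legendre j
  have hGi : IntervalIntegrable G volume (-1) 1 := hG.intervalIntegrable_of_Icc (by norm_num)
  have hSS : 𝕁 (S * S) = B := by
    rw [intervalIntegralₗ_mul_self_eq_sum (degree_sum_smul_legendre_lt m _)]
    refine Finset.sum_congr rfl fun j hj ↦ ?_
    rw [intervalIntegralₗ_sum_smul_legendre_mul_legendre (Finset.mem_range.mp hj)]
    field_simp
  have hGS : ∫ t in (-1)..1, G t * S.eval t = B := by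
    simp only [S, eval_finsetSum, eval_smul, smul_eq_mul, Finset.mul_sum, mul_left_comm (G _)]
    rw [integral_finsetSum fun j _ ↦
      (hGi.mul_continuousOn (legendre j).continuous.continuousOn).const_mul _]
    simp only [intervalIntegral.integral_const_mul, B, β]
    exact Finset.sum_congr rfl fun j _ ↦ by ring
  have hG2 : IntervalIntegrable (fun t ↦ G t ^ 2) volume (-1) 1 :=
    (hG.pow 2).intervalIntegrable_of_Icc (by norm_num)
  have hGS2 : IntervalIntegrable (fun t ↦ 2 * (G t * S.eval t)) volume (-1) 1 :=
    (hGi.mul_continuousOn S.continuous.continuousOn).const_mul 2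
  have hS2 : IntervalIntegrable (fun t ↦ S.eval t * S.eval t) volume (-1) 1 :=
    (S.continuous.mul S.continuous).intervalIntegrable _ _
  have hexpand : ∫ t in (-1)..1, (G t - S.eval t) ^ 2
      = (∫ t in (-1)..1, G t ^ 2) - 2 * (∫ t in (-1)..1, G t * S.eval t) + 𝕁 (S * S) := by
    rw [intervalIntegralₗ_mul, ← intervalIntegral.integral_const_mul, ← integral_sub hG2 hGS2,
      ← integral_add (hG2.sub hGS2) hS2]
    exact integral_congr fun t _ ↦ by ring
  have hsq : 0 ≤ ∫ t in (-1)..1, (G t - S.eval t) ^ 2 :=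
    integral_nonneg (by norm_num) fun t _ ↦ sq_nonneg _
  rw [hexpand, hGS, hSS] at hsq
  linarith

lemma sum_mul_add_neg_one_pow_sq_le (β : ℕ → ℝ) (δ : ℝ) (r : ℕ) :
    ∑ j ∈ Finset.range r, (2 * j + 1) / 2 * (β j + δ * (-1) ^ j) ^ 2
      ≤ 2 * ∑ j ∈ Finset.range r, (2 * j + 1) / 2 * β j ^ 2 + r ^ 2 * δ ^ 2 := by
  induction r with
  | zero => simp
  | succ r ih =>
    have hsq : (β r + δ * (-1) ^ r) ^ 2 ≤ 2 * β r ^ 2 + 2 * δ ^ 2 := by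
      nlinarith [sq_nonneg (β r - δ * (-1) ^ r), neg_one_pow_sq (R := ℝ) r]
    have hterm := mul_le_mul_of_nonneg_left hsq (by positivity : (0 : ℝ) ≤ (2 * r + 1) / 2)
    rw [Finset.sum_range_succ, Finset.sum_range_succ]
    push_cast
    linarith

lemma intervalIntegralₗ_mul_self_le_of_moments {r : ℕ} {G : ℝ → ℝ}
    (hG : ContinuousOn G (Icc (-1) 1)) {w : ℝ[X]} (hw : w.degree < r) {δ : ℝ}
    (h : ∀ j ≤ r,
      𝕁 (w * legendre j) = (∫ t in (-1)..1, G t * (legendre j).eval t) + δ * (-1) ^ j) :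
    𝕁 (w * w) ≤ (r + 2) * ∫ t in (-1)..1, G t ^ 2 := by
  set β : ℕ → ℝ := fun j ↦ ∫ t in (-1)..1, G t * (legendre j).eval t
  have hδ : δ ^ 2 = β r ^ 2 := by
    have hr := h r le_rfl
    rw [mul_comm, intervalIntegralₗ_legendre_mul_of_degree_lt hw] at hr
    rw [show β r = -(δ * (-1) ^ r) by linarith, neg_sq, mul_pow, neg_one_pow_sq, mul_one]
  have hparseval :
      𝕁 (w * w) = ∑ j ∈ Finset.range r, (2 * j + 1) / 2 * (β j + δ * (-1) ^ j) ^ 2 := by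
    rw [intervalIntegralₗ_mul_self_eq_sum hw]
    exact Finset.sum_congr rfl fun j hj ↦ by rw [h j (Finset.mem_range.mp hj).le]
  have hbessel := sum_sq_integral_mul_legendre_le hG (r + 1)
  rw [Finset.sum_range_succ] at hbessel
  have hnonneg : 0 ≤ ∑ j ∈ Finset.range r, (2 * j + 1) / 2 * β j ^ 2 :=
    Finset.sum_nonneg fun j _ ↦ by positivity
  have := sum_mul_add_neg_one_pow_sq_le β δ r
  rw [hparseval]
  nlinarith [sq_nonneg (β r), r.cast_nonneg (α := ℝ)]

lemma integral_sub_eval_sq_le_of_moments {r : ℕ} {G : ℝ → ℝ}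
    (hG : ContinuousOn G (Icc (-1) 1)) {w : ℝ[X]} (hw : w.degree < r) {δ : ℝ}
    (h : ∀ j ≤ r, ∫ t in (-1)..1, (G t - w.eval t) * (legendre j).eval t = -(δ * (-1) ^ j)) :
    ∫ t in (-1)..1, (G t - w.eval t) ^ 2 ≤ 2 * (r + 3) * ∫ t in (-1)..1, G t ^ 2 := by
  have hGi : IntervalIntegrable G volume (-1) 1 := hG.intervalIntegrable_of_Icc (by norm_num)
  have hw2 := intervalIntegralₗ_mul_self_le_of_moments (δ := δ) hG hw fun j hj ↦ by
    have hwL : IntervalIntegrable (fun t ↦ w.eval t * (legendre j).eval t) volume (-1) 1 :=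
      (w.continuous.mul (legendre j).continuous).intervalIntegrable _ _
    have hj := h j hj
    simp only [sub_mul] at hj
    rw [integral_sub (hGi.mul_continuousOn (legendre j).continuous.continuousOn) hwL] at hj
    rw [intervalIntegralₗ_mul]
    linarith
  have hG2 : IntervalIntegrable (fun t ↦ 2 * G t ^ 2) volume (-1) 1 :=
    ((hG.pow 2).intervalIntegrable_of_Icc (by norm_num)).const_mul 2
  have hw2i : IntervalIntegrable (fun t ↦ 2 * (w.eval t * w.eval t)) volume (-1) 1 :=
    ((w.continuous.mul w.continuous).intervalIntegrable _ _).const_mul 2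
  calc ∫ t in (-1)..1, (G t - w.eval t) ^ 2
      ≤ ∫ t in (-1)..1, (2 * G t ^ 2 + 2 * (w.eval t * w.eval t)) := by
        refine integral_mono_on (by norm_num) ?_ (hG2.add hw2i) fun t _ ↦ ?_
        · exact ((hG.sub w.continuous.continuousOn).pow 2).intervalIntegrable_of_Icc (by norm_num)
        · nlinarith [sq_nonneg (G t + w.eval t)]
    _ = 2 * (∫ t in (-1)..1, G t ^ 2) + 2 * 𝕁 (w * w) := by
        rw [integral_add hG2 hw2i, intervalIntegral.integral_const_mul,
          intervalIntegral.integral_const_mul, intervalIntegralₗ_mul]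
    _ ≤ 2 * (r + 3) * ∫ t in (-1)..1, G t ^ 2 := by linarith

end Polynomial

lemma integral_derivWithin_sub_mul_eval {a b : ℝ} (hab : a < b) {u : ℝ → ℝ}
    (hu : ContDiffOn ℝ 1 u (Icc a b)) (p P : ℝ[X]) :
    ∫ t in a..b, (derivWithin u (Icc a b) t - p.derivative.eval t) * P.eval t
      = (u b - p.eval b) * P.eval b - (u a - p.eval a) * P.eval a
        - ∫ t in a..b, (u t - p.eval t) * P.derivative.eval t := by
  have hIcc : uIcc a b = Icc a b := uIcc_of_le hab.le
  have hderiv : ∀ x ∈ uIcc a b, HasDerivWithinAt (fun t ↦ u t - p.eval t)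
      (derivWithin u (Icc a b) x - p.derivative.eval x) (uIcc a b) x := fun x hx ↦ by
    rw [hIcc] at hx ⊢
    exact ((hu.differentiableOn one_ne_zero x hx).hasDerivWithinAt).sub
      (p.hasDerivAt x).hasDerivWithinAt
  have hcont : ContinuousOn (derivWithin u (Icc a b)) (uIcc a b) :=
    hIcc ▸ hu.continuousOn_derivWithin (uniqueDiffOn_Icc hab) le_rfl
  have h := integral_mul_deriv_eq_deriv_mul_of_hasDerivWithinAt hderiv
    (fun x _ ↦ (P.hasDerivAt x).hasDerivWithinAt)
    ((hcont.sub p.derivative.continuous.continuousOn).intervalIntegrable)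
    (P.derivative.continuous.intervalIntegrable a b)
  linarith

/-- Lemma 3.2: bound for the derivative of the projection.
There is a constant `C > 0` such that for every `r ∈ ℕ` and every continuously
differentiable `u : [−1,1] → ℝ`,
`‖u′ − (Π^r u)′‖²_{L²(−1,1)} ≤ C (r+1) inf { ‖u′ − q′‖²_{L²(−1,1)} : deg q ≤ r }`;
equivalently (as formalized here), the bound holds with the infimum replaced by the
value at an arbitrary polynomial `q` of degree `≤ r`.  Here `Π^r u` is characterized as
the unique polynomial `p` of degree `≤ r` with `p 1 = u 1` and
`∫_{−1}^{1} (u − p) q̃ dt = 0` for all polynomials `q̃` of degree `< r`. -/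
theorem stmt_11 :
    ∃ C > (0 : ℝ), ∀ r : ℕ, ∀ u : ℝ → ℝ,
      ContDiffOn ℝ 1 u (Set.Icc (-1 : ℝ) 1) →
      ∀ p : Polynomial ℝ, p.natDegree ≤ r → p.eval 1 = u 1 →
        (∀ q : Polynomial ℝ, q.degree < (r : WithBot ℕ) →
          ∫ t in (-1 : ℝ)..1, (u t - p.eval t) * q.eval t = 0) →
        ∀ q : Polynomial ℝ, q.natDegree ≤ r →
          (∫ t in (-1 : ℝ)..1,
              (derivWithin u (Set.Icc (-1 : ℝ) 1) t - p.derivative.eval t) ^ 2)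
            ≤ C * ((r : ℝ) + 1)
              * ∫ t in (-1 : ℝ)..1,
                  (derivWithin u (Set.Icc (-1 : ℝ) 1) t - q.derivative.eval t) ^ 2 := by
  refine ⟨6, by norm_num, fun r u hu p hp hp1 horth q hq ↦ ?_⟩
  have hmoments : ∀ j ≤ r, ∫ t in (-1)..1, ((derivWithin u (Icc (-1) 1) t
      - q.derivative.eval t) - (p - q).derivative.eval t) * (legendre j).eval t
        = -((u (-1) - p.eval (-1)) * (-1) ^ j) := fun j hj ↦ by
    simp only [derivative_sub, eval_sub, sub_sub_sub_cancel_right]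
    rw [integral_derivWithin_sub_mul_eval (by norm_num) hu, hp1, horth _
      (degree_derivative_lt_of_natDegree_le ((natDegree_legendre_le j).trans hj)),
      legendre_eval_of_sq_eq_one neg_one_sq]
    ring
  have hG : ContinuousOn (fun t ↦ derivWithin u (Icc (-1) 1) t - q.derivative.eval t)
      (Icc (-1) 1) :=
    (hu.continuousOn_derivWithin (uniqueDiffOn_Icc (by norm_num)) le_rfl).sub
      q.derivative.continuous.continuousOn
  have key := integral_sub_eval_sq_le_of_moments hG
    (degree_derivative_lt_of_natDegree_le ((natDegree_sub_le p q).trans (max_le hp hq))) hmoments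
  simp only [derivative_sub, eval_sub, sub_sub_sub_cancel_right] at key
  exact key.trans (mul_le_mul_of_nonneg_right (by linarith)
    (integral_nonneg (by norm_num) fun t _ ↦ sq_nonneg _))
end
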